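/- arXiv:1910.05333 — 5 statements merged into one kernel-verified Lean document; each statement's English description precedes it below -/
import Mathlib

section
/- There exists a universal constant C > 0 such that for all 0 < T₀ < 1 < T₁ < ∞, whenever (x,y,s,t,N) satisfies the primary condition over [T₀,T₁] and L ∈ (0,s), one has ∫₀^{NL} | 𝔟^N(x,y;r,s,t) − ∏_{j=1,2} P( V(M_j·r/(Ns)) = V'(M_j'·r/(Nt)) ) | dr ≤ C·N·L²·(1/s + 1/t). -/
open MeasureTheory Filter Set

noncomputable section

/-- Binomial probability mass at integer index `j`, parameters `(m, p)`:
`C(m,j) p^j (1-p)^(m-j)`, interpreted as `0` unless `0 ≤ j ≤ m`. -/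
def binPMF (m : ℕ) (p : ℝ) (j : ℤ) : ℝ :=
  if 0 ≤ j then (m.choose j.toNat : ℝ) * p ^ j.toNat * (1 - p) ^ (m - j.toNat) else 0

/-- `P(S_m(p) = S'_{m'}(p') + n)` for independent binomial random variables
`S_m(p)` and `S'_{m'}(p')`. -/
def PSS (m m' : ℕ) (p p' : ℝ) (n : ℤ) : ℝ :=
  ∑ k ∈ Finset.range (m' + 1), binPMF m' p' (k : ℤ) * binPMF m p ((k : ℤ) + n)

/-- Poisson probability mass function with mean `l`. -/
def poisPMF (l : ℝ) (k : ℕ) : ℝ := Real.exp (-l) * l ^ k / (Nat.factorial k)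

/-- `P(V(l) = V'(l') + n)` for independent Poisson random variables with
means `l` and `l'`. -/
def PVV (l l' : ℝ) (n : ℤ) : ℝ :=
  ∑' k : ℕ, if 0 ≤ (k : ℤ) + n then poisPMF l' k * poisPMF l ((k : ℤ) + n).toNat else 0

/-- Centered Gaussian density with variance `v`, evaluated at `x`. -/
def gaussD (v x : ℝ) : ℝ := (Real.sqrt (2 * Real.pi * v))⁻¹ * Real.exp (-x ^ 2 / (2 * v))

/-- Euclidean distance of two points of `ℝ × ℝ` (viewed as `ℝ²`). -/
def enorm2 (a b : ℝ × ℝ) : ℝ := Real.sqrt ((a.1 - b.1) ^ 2 + (a.2 - b.2) ^ 2)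

/-- Two-dimensional heat kernel `Q_t(a,b)`. -/
def heatK (t : ℝ) (a b : ℝ × ℝ) : ℝ :=
  (2 * Real.pi * t)⁻¹ * Real.exp (-((a.1 - b.1) ^ 2 + (a.2 - b.2) ^ 2) / (2 * t))

/-- `M_N(u,r) = ⌊N r + N r · u / N^{1/2}⌋`. -/
def Mfl (N : ℕ) (u r : ℝ) : ℤ := ⌊(N : ℝ) * r + (N : ℝ) * r * (u / Real.sqrt N)⌋

/-- `𝔟^N(x,y;r,s,t) = ∏_{j=1,2} P(S_{M_j}(r/(Ns)) = S'_{M_j'}(r/(Nt)))`. -/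
def bUpper (N : ℕ) (x y : ℝ × ℝ) (r s t : ℝ) : ℝ :=
  PSS (Mfl N x.1 s).toNat (Mfl N y.1 t).toNat (r / ((N : ℝ) * s)) (r / ((N : ℝ) * t)) 0 *
  PSS (Mfl N x.2 s).toNat (Mfl N y.2 t).toNat (r / ((N : ℝ) * s)) (r / ((N : ℝ) * t)) 0

/-- `𝔟_N(x,y;r,s,t) = ∏_{j=1,2} N^{1/2} P(S_{M_j}(r/s) = S'_{M_j'}(r/t))`. -/
def bLower (N : ℕ) (x y : ℝ × ℝ) (r s t : ℝ) : ℝ :=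
  (Real.sqrt N * PSS (Mfl N x.1 s).toNat (Mfl N y.1 t).toNat (r / s) (r / t) 0) *
  (Real.sqrt N * PSS (Mfl N x.2 s).toNat (Mfl N y.2 t).toNat (r / s) (r / t) 0)

/-- The primary condition over `[T₀, T₁]` (with parameter `η ∈ (0,1/2)`). -/
def primaryCond (η T0 T1 : ℝ) (x y : ℝ × ℝ) (s t : ℝ) (N : ℕ) : Prop :=
  |x.1| ≤ (N : ℝ) ^ η / 2 ∧ |x.2| ≤ (N : ℝ) ^ η / 2 ∧
  |y.1| ≤ (N : ℝ) ^ η / 2 ∧ |y.2| ≤ (N : ℝ) ^ η / 2 ∧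
  T0 ≤ s ∧ s ≤ t ∧ t ≤ T1 ∧ 16 ≤ N ∧
  1 ≤ ⌊T0 * (N : ℝ) ^ ((1 : ℝ) / 2 - η) / 2⌋

/-- Indicator of `[1, ∞)`. -/
def ind1 (r : ℝ) : ℝ := if 1 ≤ r then 1 else 0


/-!
Each factor of `𝔟^N` is `P(S = S')` for independent binomials with success probabilities
`p = r / (N s)` and `p' = r / (N t)`, and the Poisson factor is the same probability for Poisson
variables with the matching means. By the Stein–Chen method, replacing `Bin(n, p)` by `Poi(n p)`
changes the expectation of any `[0, 1]`-valued function by at most `p`, uniformly in `n`: the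
solution `f` of the Poisson Stein equation `λ f(k + 1) - k f(k) = h(k) - E h(V)` has increments
bounded by `1 / λ`, while for a binomial `S` the expectation of the left-hand side is
`λ p E[f(S' + 2) - f(S' + 1)]`. Replacing the two binomials of a factor one at a time costs
`p + p'`, a product of two such factors costs `2 (p + p')`, and integrating
`2 r (1/(N s) + 1/(N t))` over `r ∈ [0, N L]` gives the bound with `C = 1`.
-/

open Finset

section WeightedAverage

variable {ι : Type*} {w h : ι → ℝ}

lemma sum_mul_mem_Icc (s : Finset ι) (hw : ∀ i, 0 ≤ w i) (hh : ∀ i, h i ∈ Icc (0 : ℝ) 1) :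
    ∑ i ∈ s, w i * h i ∈ Icc 0 (∑ i ∈ s, w i) :=
  ⟨sum_nonneg fun i _ => mul_nonneg (hw i) (hh i).1,
    sum_le_sum fun i _ => mul_le_of_le_one_right (hw i) (hh i).2⟩

lemma Summable.mul_of_mem_Icc (hsum : Summable w) (hw : ∀ i, 0 ≤ w i)
    (hh : ∀ i, h i ∈ Icc (0 : ℝ) 1) : Summable fun i => w i * h i :=
  hsum.of_nonneg_of_le (fun i => mul_nonneg (hw i) (hh i).1)
    (fun i => mul_le_of_le_one_right (hw i) (hh i).2)

lemma tsum_mul_mem_Icc (hsum : Summable w) (hw : ∀ i, 0 ≤ w i) (hh : ∀ i, h i ∈ Icc (0 : ℝ) 1) :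
    ∑' i, w i * h i ∈ Icc 0 (∑' i, w i) :=
  ⟨tsum_nonneg fun i => mul_nonneg (hw i) (hh i).1,
    (hsum.mul_of_mem_Icc hw hh).tsum_le_tsum (fun i => mul_le_of_le_one_right (hw i) (hh i).2)
      hsum⟩

end WeightedAverage

section Binomial

def binom (n : ℕ) (p : ℝ) (k : ℕ) : ℝ := n.choose k * p ^ k * (1 - p) ^ (n - k)

variable {p : ℝ}

lemma binom_nonneg (hp : p ∈ Icc (0 : ℝ) 1) (n k : ℕ) : 0 ≤ binom n p k :=
  mul_nonneg (mul_nonneg (n.choose k).cast_nonneg (pow_nonneg hp.1 k))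
    (pow_nonneg (sub_nonneg.2 hp.2) _)

lemma sum_binom (n : ℕ) (p : ℝ) : ∑ k ∈ range (n + 1), binom n p k = 1 := by
  have h := add_pow p (1 - p) n
  rw [add_sub_cancel, one_pow] at h
  rw [h]
  exact sum_congr rfl fun k _ => by unfold binom; ring

lemma binom_eq_zero_of_lt {n k : ℕ} (h : n < k) (p : ℝ) : binom n p k = 0 := by
  simp [binom, Nat.choose_eq_zero_of_lt h]

lemma binom_mem_Icc (hp : p ∈ Icc (0 : ℝ) 1) (n k : ℕ) : binom n p k ∈ Icc (0 : ℝ) 1 := by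
  refine ⟨binom_nonneg hp n k, ?_⟩
  rcases le_or_gt k n with hk | hk
  · exact (single_le_sum (fun j _ => binom_nonneg hp n j)
      (mem_range.2 (Nat.lt_succ_of_le hk))).trans_eq (sum_binom n p)
  · rw [binom_eq_zero_of_lt hk]; exact zero_le_one

lemma binom_succ_zero (n : ℕ) (p : ℝ) : binom (n + 1) p 0 = (1 - p) * binom n p 0 := by
  simp [binom, pow_succ, mul_comm]

lemma binom_succ_succ (n : ℕ) (p : ℝ) (k : ℕ) :
    binom (n + 1) p (k + 1) = (1 - p) * binom n p (k + 1) + p * binom n p k := by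
  rcases lt_trichotomy k n with hk | rfl | hk
  · obtain ⟨j, rfl⟩ := Nat.exists_eq_add_of_lt hk
    simp only [binom, Nat.choose_succ_succ', Nat.cast_add]
    rw [show k + j + 1 + 1 - (k + 1) = j + 1 by omega, show k + j + 1 - (k + 1) = j by omega,
      show k + j + 1 - k = j + 1 by omega]
    ring
  · simp [binom, pow_succ, mul_comm]
  · rw [binom_eq_zero_of_lt (by omega), binom_eq_zero_of_lt (by omega),
      binom_eq_zero_of_lt hk]
    ring

lemma succ_mul_binom_succ (n : ℕ) (p : ℝ) (k : ℕ) :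
    (k + 1) * binom (n + 1) p (k + 1) = (n + 1) * p * binom n p k := by
  have h : ((n + 1 : ℕ) : ℝ) * n.choose k = (n + 1).choose (k + 1) * (k + 1 : ℕ) := by
    exact_mod_cast Nat.add_one_mul_choose_eq n k
  simp only [binom, Nat.add_sub_add_right]
  push_cast at h
  linear_combination (-(p ^ (k + 1) * (1 - p) ^ (n - k))) * h

lemma sum_binom_succ_mul (n : ℕ) (p : ℝ) (g : ℕ → ℝ) :
    ∑ k ∈ range (n + 2), binom (n + 1) p k * g k =
      (1 - p) * ∑ k ∈ range (n + 1), binom n p k * g k +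
        p * ∑ k ∈ range (n + 1), binom n p k * g (k + 1) := by
  have hshift : ∑ k ∈ range (n + 1), binom n p (k + 1) * g (k + 1) + binom n p 0 * g 0 =
      ∑ k ∈ range (n + 1), binom n p k * g k := by
    rw [← sum_range_succ' (fun k => binom n p k * g k), sum_range_succ,
      binom_eq_zero_of_lt n.lt_succ_self, zero_mul, add_zero]
  rw [sum_range_succ', ← hshift]
  simp only [binom_succ_succ, binom_succ_zero, add_mul, sum_add_distrib, mul_assoc, ← mul_sum]
  ring

lemma sum_natCast_mul_binom_succ_mul (n : ℕ) (p : ℝ) (g : ℕ → ℝ) :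
    ∑ k ∈ range (n + 2), k * binom (n + 1) p k * g k =
      (n + 1) * p * ∑ k ∈ range (n + 1), binom n p k * g (k + 1) := by
  rw [sum_range_succ', mul_sum]
  simp only [Nat.cast_zero, zero_mul, add_zero, Nat.cast_succ]
  exact sum_congr rfl fun k _ => by rw [succ_mul_binom_succ]; ring

-- Stein's identity `E[λ f(S + 1) - S f(S)] = λ p E[f(S' + 2) - f(S' + 1)]` for
-- `S ~ Bin(n + 1, p)`, `S' ~ Bin(n, p)` and `λ = (n + 1) p`.
lemma sum_binom_mul_stein (n : ℕ) (p : ℝ) (f : ℕ → ℝ) :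
    ∑ k ∈ range (n + 2), binom (n + 1) p k * ((n + 1) * p * f (k + 1) - k * f k) =
      (n + 1) * p ^ 2 * ∑ k ∈ range (n + 1), binom n p k * (f (k + 2) - f (k + 1)) := by
  have hsplit : ∑ k ∈ range (n + 2), binom (n + 1) p k * ((n + 1) * p * f (k + 1) - k * f k) =
      (n + 1) * p * ∑ k ∈ range (n + 2), binom (n + 1) p k * f (k + 1) -
        ∑ k ∈ range (n + 2), k * binom (n + 1) p k * f k := by
    rw [mul_sum, ← sum_sub_distrib]
    exact sum_congr rfl fun k _ => by ring
  rw [hsplit, sum_binom_succ_mul, sum_natCast_mul_binom_succ_mul]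
  simp only [mul_sub (binom n p _), sum_sub_distrib]
  ring

end Binomial

lemma abs_mul_add_mul_sub_mul_le {a x b F G α δ γ : ℝ} (ha : a ∈ Icc 0 F)
    (hx : x ∈ Icc (0 : ℝ) 1) (hb : b ∈ Icc 0 G) (hα : α ≤ 0) (hδ : 0 ≤ δ) (hγ : 0 ≤ γ)
    (hzero : F * α + δ - G * γ = 0) : |a * α + x * δ - b * γ| ≤ δ := by
  refine abs_le.2 ⟨?_, ?_⟩
  · nlinarith [mul_le_mul_of_nonpos_right ha.2 hα, mul_le_mul_of_nonneg_right hb.2 hγ,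
      mul_nonneg hx.1 hδ]
  · nlinarith [mul_nonpos_of_nonneg_of_nonpos ha.1 hα, mul_nonneg hb.1 hγ,
      mul_le_of_le_one_left hδ hx.2]

-- `F, π, G` are the Poisson masses of `[0, k)`, `{k}`, `(k, ∞)`, and `A, π x, B` the parts of
-- `E h(V)` they carry; the left-hand side is `f(k + 1) - f(k)` for the Stein solution `f`.
lemma abs_stein_increment_le {lam k π F G A B x μ : ℝ} (hlam : 0 < lam) (hk : 0 < k) (hπ : 0 < π)
    (hmass : F + π + G = 1) (hmean : A + π * x + B = μ) (hA : A ∈ Icc 0 F)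
    (hx : x ∈ Icc (0 : ℝ) 1) (hB : B ∈ Icc 0 G) (hhead : lam * F ≤ k * (F + π))
    (htail : k * G ≤ lam * (π + G)) :
    |(A + π * x - μ * (F + π)) / (lam * π) - (A - F * μ) / (k * π)| ≤ 1 / lam := by
  -- The increment is a signed combination of the values of `h` whose only positive weight
  -- `π δ` sits at `k`; the weights sum to zero (the case `h ≡ 1`), so it is at most `π δ`.
  set α := k * G - lam * (π + G)
  set δ := k * G + lam * F
  set γ := k * (F + π) - lam * F
  have hdiff : (A + π * x - μ * (F + π)) / (lam * π) - (A - F * μ) / (k * π) =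
      (A * α + x * (π * δ) - B * γ) / (lam * k * π) := by
    rw [← hmean, div_sub_div _ _ (by positivity) (by positivity)]
    field_simp
    linear_combination (-(A * (k - lam) + π * x * k)) * hmass
  have hδ : π * δ ≤ k * π := by
    have hk1 : k = k * (F + π + G) := by rw [hmass, mul_one]
    rw [mul_comm k]
    exact mul_le_mul_of_nonneg_left (by linarith) hπ.le
  have hδ0 : 0 ≤ π * δ := mul_nonneg hπ.le (by nlinarith [hA.1.trans hA.2, hB.1.trans hB.2])
  have hE := abs_mul_add_mul_sub_mul_le hA hx hB (by linarith : α ≤ 0) hδ0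
    (by linarith : 0 ≤ γ) (by ring)
  have hden : 0 < lam * k * π := by positivity
  rw [hdiff, abs_div, abs_of_pos hden, div_le_div_iff₀ hden hlam]
  nlinarith [mul_le_mul_of_nonneg_right hE hlam.le]

section PoissonStein

variable {lam : ℝ}

lemma poisPMF_nonneg (hlam : 0 ≤ lam) (k : ℕ) : 0 ≤ poisPMF lam k := by
  unfold poisPMF; positivity

lemma poisPMF_pos (hlam : 0 < lam) (k : ℕ) : 0 < poisPMF lam k := by
  unfold poisPMF; positivity

lemma hasSum_poisPMF (hlam : 0 ≤ lam) : HasSum (poisPMF lam) 1 :=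
  ProbabilityTheory.hasSum_one_poissonMeasure ⟨lam, hlam⟩

lemma poisPMF_mem_Icc (hlam : 0 ≤ lam) (k : ℕ) : poisPMF lam k ∈ Icc (0 : ℝ) 1 :=
  ⟨poisPMF_nonneg hlam k,
    (hasSum_poisPMF hlam).summable.le_tsum k (fun j _ => poisPMF_nonneg hlam j) |>.trans_eq
      (hasSum_poisPMF hlam).tsum_eq⟩

lemma succ_mul_poisPMF_succ (lam : ℝ) (k : ℕ) :
    (k + 1) * poisPMF lam (k + 1) = lam * poisPMF lam k := by
  simp only [poisPMF, Nat.factorial_succ, Nat.cast_mul, pow_succ]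
  field_simp
  push_cast
  ring

lemma poisPMF_zero_left (k : ℕ) : poisPMF 0 k = if k = 0 then 1 else 0 := by
  rcases k with _ | k <;> simp [poisPMF]

def poisMean (lam : ℝ) (h : ℕ → ℝ) : ℝ := ∑' k, poisPMF lam k * h k

variable {h : ℕ → ℝ}

lemma poisMean_mem_Icc (hlam : 0 ≤ lam) (hh : ∀ k, h k ∈ Icc (0 : ℝ) 1) :
    poisMean lam h ∈ Icc (0 : ℝ) 1 := by
  rw [poisMean, ← (hasSum_poisPMF hlam).tsum_eq]
  exact tsum_mul_mem_Icc (hasSum_poisPMF hlam).summable (poisPMF_nonneg hlam) hh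

lemma poisMean_zero (h : ℕ → ℝ) : poisMean 0 h = h 0 := by
  rw [poisMean, tsum_eq_single 0 fun k hk => by simp [poisPMF_zero_left, hk]]
  simp [poisPMF_zero_left]

lemma mul_sum_range_poisPMF_le (hlam : 0 ≤ lam) (k : ℕ) :
    lam * ∑ i ∈ range k, poisPMF lam i ≤ k * ∑ i ∈ range (k + 1), poisPMF lam i := by
  calc lam * ∑ i ∈ range k, poisPMF lam i
      = ∑ i ∈ range k, (i + 1) * poisPMF lam (i + 1) := by
        rw [mul_sum]; exact sum_congr rfl fun i _ => (succ_mul_poisPMF_succ lam i).symm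
    _ ≤ ∑ i ∈ range k, k * poisPMF lam (i + 1) := by
        refine sum_le_sum fun i hi => mul_le_mul_of_nonneg_right ?_ (poisPMF_nonneg hlam _)
        exact_mod_cast mem_range.1 hi
    _ ≤ k * ∑ i ∈ range (k + 1), poisPMF lam i := by
        rw [← mul_sum, sum_range_succ' _ k]
        exact mul_le_mul_of_nonneg_left (le_add_of_nonneg_right (poisPMF_nonneg hlam 0))
          k.cast_nonneg

lemma mul_tsum_poisPMF_le (hlam : 0 ≤ lam) (k : ℕ) :
    k * ∑' i, poisPMF lam (i + (k + 1)) ≤ lam * ∑' i, poisPMF lam (i + k) := by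
  have hsum := (hasSum_poisPMF hlam).summable
  rw [← tsum_mul_left, ← tsum_mul_left]
  refine Summable.tsum_le_tsum (fun i => ?_) ((summable_nat_add_iff _).2 hsum |>.mul_left _)
    ((summable_nat_add_iff _).2 hsum |>.mul_left _)
  rw [← succ_mul_poisPMF_succ, ← add_assoc]
  refine mul_le_mul_of_nonneg_right ?_ (poisPMF_nonneg hlam _)
  push_cast
  linarith [i.cast_nonneg (α := ℝ)]

-- At `k = 0` the denominator vanishes and the junk value `0` is the usual normalisation `f 0 = 0`.
def steinSol (lam : ℝ) (h : ℕ → ℝ) (k : ℕ) : ℝ :=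
  (∑ i ∈ range k, poisPMF lam i * (h i - poisMean lam h)) / (k * poisPMF lam k)

lemma steinSol_spec (hlam : 0 < lam) (h : ℕ → ℝ) (k : ℕ) :
    lam * steinSol lam h (k + 1) - k * steinSol lam h k = h k - poisMean lam h := by
  have hπ := (poisPMF_pos hlam k).ne'
  have hk : (k : ℝ) * steinSol lam h k =
      (∑ i ∈ range k, poisPMF lam i * (h i - poisMean lam h)) / poisPMF lam k := by
    rcases k.eq_zero_or_pos with rfl | hk
    · simp
    · rw [steinSol, mul_div_assoc', mul_div_mul_left _ _ (by positivity)]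
  rw [hk, steinSol, sum_range_succ, Nat.cast_succ, succ_mul_poisPMF_succ]
  field_simp
  ring

lemma abs_steinSol_succ_sub_le (hlam : 0 < lam) (hh : ∀ k, h k ∈ Icc (0 : ℝ) 1) {k : ℕ}
    (hk : k ≠ 0) : |steinSol lam h (k + 1) - steinSol lam h k| ≤ 1 / lam := by
  set π := poisPMF lam
  set μ := poisMean lam h
  set F := ∑ i ∈ range k, π i
  set A := ∑ i ∈ range k, π i * h i
  set G := ∑' i, π (i + (k + 1))
  set B := ∑' i, π (i + (k + 1)) * h (i + (k + 1))
  have hsum := (hasSum_poisPMF hlam.le).summable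
  have hmass : F + π k + G = 1 := by
    rw [← sum_range_succ, ← (hasSum_poisPMF hlam.le).tsum_eq]
    exact hsum.sum_add_tsum_nat_add (k + 1)
  have hmean : A + π k * h k + B = μ := by
    rw [← sum_range_succ (fun i => π i * h i)]
    exact (hsum.mul_of_mem_Icc (poisPMF_nonneg hlam.le) hh).sum_add_tsum_nat_add (k + 1)
  have hA : A ∈ Icc 0 F := sum_mul_mem_Icc _ (poisPMF_nonneg hlam.le) hh
  have hB : B ∈ Icc 0 G :=
    tsum_mul_mem_Icc ((summable_nat_add_iff _).2 hsum) (fun _ => poisPMF_nonneg hlam.le _)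
      (fun _ => hh _)
  have hhead : lam * F ≤ k * (F + π k) := by
    simpa only [sum_range_succ] using mul_sum_range_poisPMF_le hlam.le k
  have htail : k * G ≤ lam * (π k + G) := by
    have h := mul_tsum_poisPMF_le hlam.le k
    rw [((summable_nat_add_iff k).2 hsum).tsum_eq_zero_add, zero_add] at h
    simpa only [add_assoc, add_comm 1 k] using h
  have hfk : steinSol lam h k = (A - F * μ) / (k * π k) := by
    simp only [steinSol, mul_sub, sum_sub_distrib, ← sum_mul]
    rfl
  have hfk1 : steinSol lam h (k + 1) = (A + π k * h k - μ * (F + π k)) / (lam * π k) := by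
    simp only [steinSol, Nat.cast_succ, succ_mul_poisPMF_succ, sum_range_succ, mul_sub,
      sum_sub_distrib, ← sum_mul]
    ring
  rw [hfk, hfk1]
  exact abs_stein_increment_le hlam (by positivity) (poisPMF_pos hlam k) hmass hmean hA (hh k) hB
    hhead htail

end PoissonStein

section SteinChen

variable {p : ℝ} {h : ℕ → ℝ}

theorem abs_sum_binom_mul_sub_poisMean_le (hp : p ∈ Icc (0 : ℝ) 1)
    (hh : ∀ k, h k ∈ Icc (0 : ℝ) 1) (n : ℕ) :
    |∑ k ∈ range (n + 1), binom n p k * h k - poisMean (n * p) h| ≤ p := by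
  rcases n with _ | n
  · simp [binom, poisMean_zero, hp.1]
  rcases hp.1.eq_or_lt with rfl | hp0
  · rw [mul_zero, poisMean_zero, sum_eq_single 0 (fun k _ hk => by simp [binom, hk]) (by simp)]
    simp [binom]
  rw [Nat.cast_succ]
  set lam : ℝ := (n + 1) * p with hlam_def
  have hlam : 0 < lam := by positivity
  set f := steinSol lam h
  have hstein : ∑ k ∈ range (n + 2), binom (n + 1) p k * h k - poisMean lam h =
      ∑ k ∈ range (n + 2), binom (n + 1) p k * (lam * f (k + 1) - k * f k) := by
    simp only [f, steinSol_spec hlam, mul_sub, sum_sub_distrib, ← sum_mul, sum_binom, one_mul]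
  rw [hstein, hlam_def, sum_binom_mul_stein, abs_mul,
    abs_of_nonneg (by positivity)]
  calc (n + 1) * p ^ 2 * |∑ k ∈ range (n + 1), binom n p k * (f (k + 2) - f (k + 1))|
      ≤ (n + 1) * p ^ 2 * ∑ k ∈ range (n + 1), binom n p k * (1 / lam) := by
        refine mul_le_mul_of_nonneg_left ((abs_sum_le_sum_abs _ _).trans (sum_le_sum fun k _ => ?_))
          (by positivity)
        rw [abs_mul, abs_of_nonneg (binom_nonneg hp n k)]
        exact mul_le_mul_of_nonneg_left (abs_steinSol_succ_sub_le hlam hh k.succ_ne_zero)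
          (binom_nonneg hp n k)
    _ = p := by
        rw [← sum_mul, sum_binom, hlam_def]
        field_simp

end SteinChen

lemma PSS_zero_eq (m m' : ℕ) (p p' : ℝ) :
    PSS m m' p p' 0 = ∑ k ∈ range (m' + 1), binom m' p' k * binom m p k := by
  simp [PSS, binPMF, binom]

lemma PVV_zero_eq (l l' : ℝ) : PVV l l' 0 = poisMean l (poisPMF l') := by
  simp only [PVV, poisMean, add_zero, Nat.cast_nonneg, if_true, Int.toNat_natCast, mul_comm]

lemma PSS_mem_Icc {p p' : ℝ} (hp : p ∈ Icc (0 : ℝ) 1) (hp' : p' ∈ Icc (0 : ℝ) 1) (m m' : ℕ) :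
    PSS m m' p p' 0 ∈ Icc (0 : ℝ) 1 := by
  rw [PSS_zero_eq, ← sum_binom m' p']
  exact sum_mul_mem_Icc _ (binom_nonneg hp' m') (binom_mem_Icc hp m)

lemma PVV_mem_Icc {l l' : ℝ} (hl : 0 ≤ l) (hl' : 0 ≤ l') : PVV l l' 0 ∈ Icc (0 : ℝ) 1 := by
  rw [PVV_zero_eq]
  exact poisMean_mem_Icc hl (poisPMF_mem_Icc hl')

lemma abs_PSS_sub_PVV_le {p p' : ℝ} (hp : p ∈ Icc (0 : ℝ) 1) (hp' : p' ∈ Icc (0 : ℝ) 1)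
    (m m' : ℕ) : |PSS m m' p p' 0 - PVV (m * p) (m' * p') 0| ≤ p + p' := by
  have hl' : (0 : ℝ) ≤ m' * p' := mul_nonneg m'.cast_nonneg hp'.1
  have hfinite : poisMean (m' * p') (binom m p) =
      ∑ k ∈ range (m + 1), binom m p k * poisPMF (m' * p') k := by
    rw [poisMean, tsum_eq_sum (s := range (m + 1)) fun k hk => by
      rw [binom_eq_zero_of_lt (by simpa [Nat.lt_succ_iff] using hk), mul_zero]]
    exact sum_congr rfl fun k _ => mul_comm _ _
  rw [PSS_zero_eq, PVV_zero_eq]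
  calc _ ≤ |∑ k ∈ range (m' + 1), binom m' p' k * binom m p k - poisMean (m' * p') (binom m p)| +
        |poisMean (m' * p') (binom m p) - poisMean (m * p) (poisPMF (m' * p'))| :=
        abs_sub_le _ _ _
    _ ≤ p' + p := by
        gcongr
        · exact abs_sum_binom_mul_sub_poisMean_le hp' (binom_mem_Icc hp m) m'
        · rw [hfinite]
          exact abs_sum_binom_mul_sub_poisMean_le hp (poisPMF_mem_Icc hl') m
    _ = p + p' := add_comm _ _

lemma abs_mul_sub_mul_le {a b c d : ℝ} (hb : b ∈ Icc (0 : ℝ) 1) (hc : c ∈ Icc (0 : ℝ) 1) :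
    |a * b - c * d| ≤ |a - c| + |b - d| := by
  calc |a * b - c * d| = |(a - c) * b + c * (b - d)| := by ring_nf
    _ ≤ |(a - c) * b| + |c * (b - d)| := abs_add_le _ _
    _ = |a - c| * b + c * |b - d| := by
        rw [abs_mul, abs_mul, abs_of_nonneg hb.1, abs_of_nonneg hc.1]
    _ ≤ |a - c| + |b - d| := by
        nlinarith [abs_nonneg (a - c), abs_nonneg (b - d), hb.2, hc.2]

lemma Mfl_nonneg {N : ℕ} {u r : ℝ} (hr : 0 ≤ r) (hu : |u| ≤ √N) : 0 ≤ Mfl N u r := by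
  have hdiv : -1 ≤ u / √N := by
    rcases (Real.sqrt_nonneg (N : ℝ)).eq_or_lt with h0 | h0
    · simp [← h0]
    · rw [le_div_iff₀ h0]
      linarith [neg_abs_le u]
  rw [Mfl, Int.floor_nonneg]
  calc (0 : ℝ) ≤ N * r * (1 + u / √N) := by
        have : 0 ≤ 1 + u / √N := by linarith
        positivity
    _ = N * r + N * r * (u / √N) := by ring

lemma div_mem_Icc_zero_one {r d : ℝ} (hr : 0 ≤ r) (hd : r ≤ d) : r / d ∈ Icc (0 : ℝ) 1 :=
  ⟨div_nonneg hr (hr.trans hd), div_le_one_of_le₀ hd (hr.trans hd)⟩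

lemma abs_PSS_toNat_sub_PVV_le {M M' : ℤ} (hM : 0 ≤ M) (hM' : 0 ≤ M') {r d d' : ℝ}
    (hr : 0 ≤ r) (hd : r ≤ d) (hd' : r ≤ d') :
    |PSS M.toNat M'.toNat (r / d) (r / d') 0 - PVV (M * r / d) (M' * r / d') 0| ≤
      r / d + r / d' := by
  obtain ⟨m, rfl⟩ := Int.eq_ofNat_of_zero_le hM
  obtain ⟨m', rfl⟩ := Int.eq_ofNat_of_zero_le hM'
  simp only [Int.toNat_natCast, Int.cast_natCast, mul_div_assoc]
  exact abs_PSS_sub_PVV_le (div_mem_Icc_zero_one hr hd) (div_mem_Icc_zero_one hr hd') m m'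

lemma abs_bUpper_sub_le {N : ℕ} {x y : ℝ × ℝ} {r s t : ℝ}
    (hx₁ : 0 ≤ Mfl N x.1 s) (hx₂ : 0 ≤ Mfl N x.2 s) (hy₁ : 0 ≤ Mfl N y.1 t)
    (hy₂ : 0 ≤ Mfl N y.2 t) (hr : 0 ≤ r) (hrs : r ≤ N * s) (hrt : r ≤ N * t) :
    |bUpper N x y r s t -
        PVV (Mfl N x.1 s * r / (N * s)) (Mfl N y.1 t * r / (N * t)) 0 *
          PVV (Mfl N x.2 s * r / (N * s)) (Mfl N y.2 t * r / (N * t)) 0| ≤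
      2 * (r / (N * s) + r / (N * t)) := by
  have hl : ∀ {M : ℤ} {d}, 0 ≤ M → r ≤ d → (0 : ℝ) ≤ M * r / d := fun hM hd =>
    div_nonneg (mul_nonneg (Int.cast_nonneg hM) hr) (hr.trans hd)
  refine (abs_mul_sub_mul_le
    (PSS_mem_Icc (div_mem_Icc_zero_one hr hrs) (div_mem_Icc_zero_one hr hrt) _ _)
    (PVV_mem_Icc (hl hx₁ hrs) (hl hy₁ hrt))).trans ?_
  linarith [abs_PSS_toNat_sub_PVV_le hx₁ hy₁ hr hrs hrt,
    abs_PSS_toNat_sub_PVV_le hx₂ hy₂ hr hrs hrt]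

lemma integral_abs_le_of_abs_le_mul {f : ℝ → ℝ} {b c : ℝ} (hb : 0 ≤ b)
    (hf : ∀ r ∈ Icc 0 b, |f r| ≤ c * r) : ∫ r in 0..b, |f r| ≤ c * b ^ 2 / 2 := by
  calc ∫ r in 0..b, |f r| ≤ ‖∫ r in 0..b, |f r|‖ := le_abs_self _
    _ ≤ ∫ r in 0..b, c * r :=
        intervalIntegral.norm_integral_le_of_norm_le hb
          (ae_of_all _ fun r hr => by simpa using hf r (Ioc_subset_Icc_self hr))
          ((continuous_const.mul continuous_id).intervalIntegrable 0 b)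
    _ = c * b ^ 2 / 2 := by
        rw [intervalIntegral.integral_const_mul, integral_id]
        ring

theorem stmt1 :
    ∃ C : ℝ, 0 < C ∧
      ∀ (η T0 T1 : ℝ), 0 < η → η < 1 / 2 → 0 < T0 → T0 < 1 → 1 < T1 →
        ∀ (x y : ℝ × ℝ) (s t : ℝ) (N : ℕ), primaryCond η T0 T1 x y s t N →
          ∀ L : ℝ, 0 < L → L < s →
            (∫ r in (0:ℝ)..((N : ℝ) * L),
              |bUpper N x y r s t -
                PVV (((Mfl N x.1 s : ℤ) : ℝ) * r / ((N : ℝ) * s))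
                    (((Mfl N y.1 t : ℤ) : ℝ) * r / ((N : ℝ) * t)) 0 *
                PVV (((Mfl N x.2 s : ℤ) : ℝ) * r / ((N : ℝ) * s))
                    (((Mfl N y.2 t : ℤ) : ℝ) * r / ((N : ℝ) * t)) 0|) ≤
            C * N * L ^ 2 * (1 / s + 1 / t) := by
  refine ⟨1, one_pos, fun η T0 T1 _ hη hT0 _ _ x y s t N hpc L hL hLs => ?_⟩
  obtain ⟨hx₁, hx₂, hy₁, hy₂, hT0s, hst, -, hN, -⟩ := hpc
  have hs : 0 < s := hT0.trans_le hT0s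
  have hN1 : (1 : ℝ) ≤ N := by exact_mod_cast (show 1 ≤ N by omega)
  have hroot : (N : ℝ) ^ η ≤ √N := by
    rw [Real.sqrt_eq_rpow]
    exact Real.rpow_le_rpow_of_exponent_le hN1 hη.le
  have hM : ∀ {u r : ℝ}, |u| ≤ (N : ℝ) ^ η / 2 → 0 < r → 0 ≤ Mfl N u r := fun {u _} hu hr =>
    Mfl_nonneg hr.le (by linarith [abs_nonneg u])
  have hNLs : (N : ℝ) * L ≤ N * s := by gcongr
  have hNst : (N : ℝ) * s ≤ N * t := by gcongr
  calc _ ≤ 2 * (1 / (N * s) + 1 / (N * t)) * (N * L) ^ 2 / 2 :=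
        integral_abs_le_of_abs_le_mul (by positivity) fun r hr =>
          (abs_bUpper_sub_le (hM hx₁ hs) (hM hx₂ hs) (hM hy₁ (hs.trans_le hst))
            (hM hy₂ (hs.trans_le hst)) hr.1 (hr.2.trans hNLs)
            ((hr.2.trans hNLs).trans hNst)).trans_eq (by ring)
    _ = 1 * N * L ^ 2 * (1 / s + 1 / t) := by
        field_simp
end
end

section
/- There exists a universal constant C > 0 such that for all λ, λ' ∈ (0,∞) and all a ∈ ℤ, | P(V(λ) = V'(λ') + a) − (λ+λ')^{−1/2}·g(1; (−λ+λ'+a)/(λ+λ')^{1/2}) | ≤ C/(λ+λ'). In other words, the Skellam probability mass function admits a Gaussian local approximation with error of order 1/(λ+λ'), uniformly in the argument a. -/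
open MeasureTheory Filter Set

noncomputable section

/-!
Fourier inversion on the circle writes `2π · P(V = V' + a)` as the integral over `(-π, π]` of
`exp (λ(e^{iθ} - 1) + λ'(e^{-iθ} - 1) - iaθ)`, and the Gaussian term as `1/2π` times the
integral over `ℝ` of `exp (i(λ - λ' - a)θ - (λ + λ')θ²/2)`. For `|θ| ≤ π` the two exponents
differ by at most `(λ + λ')|θ|³` (third-order Taylor expansion of `e^{±iθ}`), and both real
parts are at most `-bθ²` with `b = 2(λ + λ')/π²` (as `cos θ ≤ 1 - 2θ²/π²` there), so the
integrands differ by at most `(λ + λ')|θ|³ e^{-bθ²}`, whose integral is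
`(λ + λ')/b² = π⁴/(4(λ + λ'))`. For `|θ| > π` the Gaussian integrand is at most
`(|θ|/π) e^{-(λ + λ')θ²/2}`, whose integral is `2/(π(λ + λ'))`.
-/

open Complex

lemma poisPMF_nonneg_s4 {l : ℝ} (hl : 0 ≤ l) (k : ℕ) : 0 ≤ poisPMF l k := by
  unfold poisPMF
  positivity

lemma poisPMF_eq_mul_pow_div (l : ℝ) (k : ℕ) :
    poisPMF l k = Real.exp (-l) * (l ^ k / k.factorial) :=
  mul_div_assoc _ _ _

lemma summable_poisPMF (l : ℝ) : Summable (poisPMF l) := by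
  simpa only [← poisPMF_eq_mul_pow_div] using
    (Real.summable_pow_div_factorial l).mul_left (Real.exp (-l))

lemma summable_poisPMF_mul_poisPMF {l l' : ℝ} (hl : 0 ≤ l) (hl' : 0 ≤ l') :
    Summable fun p : ℕ × ℕ => poisPMF l' p.1 * poisPMF l p.2 :=
  (summable_poisPMF l').mul_of_nonneg (summable_poisPMF l) (poisPMF_nonneg_s4 hl') (poisPMF_nonneg_s4 hl)

lemma summable_norm_poisPMF_mul_pow (l : ℝ) (w : ℂ) :
    Summable fun k : ℕ => ‖(poisPMF l k : ℂ) * w ^ k‖ := by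
  refine ((Real.summable_pow_div_factorial (|l| * ‖w‖)).mul_left (Real.exp (-l))).congr
    fun k => ?_
  rw [norm_mul, norm_pow, norm_real, poisPMF_eq_mul_pow_div, Real.norm_eq_abs, abs_mul, abs_div,
    abs_pow, Real.abs_exp, Nat.abs_cast]
  ring

lemma tsum_poisPMF_mul_pow (l : ℝ) (w : ℂ) :
    ∑' k : ℕ, (poisPMF l k : ℂ) * w ^ k = cexp (l * (w - 1)) := by
  have hterm (k : ℕ) :
      (poisPMF l k : ℂ) * w ^ k = cexp (-l) * ((l * w) ^ k / k.factorial) := by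
    push_cast [poisPMF_eq_mul_pow_div, mul_pow]
    ring
  have hexp : ∑' k : ℕ, ((l : ℂ) * w) ^ k / k.factorial = cexp (l * w) := by
    rw [Complex.exp_eq_exp_ℂ, NormedSpace.exp_eq_tsum_div]
  simp_rw [hterm]
  rw [tsum_mul_left, hexp, ← Complex.exp_add]
  ring_nf

lemma PVV_eq_tsum_prod {l l' : ℝ} (hl : 0 ≤ l) (hl' : 0 ≤ l') (a : ℤ) :
    PVV l l' a = ∑' p : ℕ × ℕ,
      if (p.2 - p.1 - a : ℤ) = 0 then poisPMF l' p.1 * poisPMF l p.2 else 0 := by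
  have hprod (p : ℕ × ℕ) : 0 ≤ poisPMF l' p.1 * poisPMF l p.2 :=
    mul_nonneg (poisPMF_nonneg_s4 hl' _) (poisPMF_nonneg_s4 hl _)
  have hsum : Summable fun p : ℕ × ℕ =>
      if (p.2 - p.1 - a : ℤ) = 0 then poisPMF l' p.1 * poisPMF l p.2 else 0 :=
    (summable_poisPMF_mul_poisPMF hl hl').of_nonneg_of_le
      (fun p => by split_ifs <;> simp [hprod p]) (fun p => by split_ifs <;> simp [hprod p])
  rw [hsum.tsum_prod' hsum.prod_factor, PVV]
  congr 1 with k
  split_ifs with hk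
  · rw [tsum_eq_single (k + a).toNat fun j hj => if_neg (by omega)]
    simp [Int.toNat_of_nonneg hk]
  · rw [tsum_congr fun j => if_neg (by omega), tsum_zero]

lemma setIntegral_cexp_int_mul_I (n : ℤ) :
    ∫ θ in Ioc (-Real.pi) Real.pi, cexp (I * n * θ) = if n = 0 then 2 * Real.pi else 0 := by
  rw [← intervalIntegral.integral_of_le (by linarith [Real.pi_pos])]
  split_ifs with hn
  · simp [hn, two_mul]
  · have hperiodic : cexp (I * n * Real.pi) =
        cexp (I * n * (-Real.pi : ℝ)) * cexp (n * (2 * Real.pi * I)) := by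
      rw [← Complex.exp_add]
      push_cast
      ring_nf
    rw [integral_exp_mul_complex (by simp [hn]), hperiodic, exp_int_mul_two_pi_mul_I]
    simp

/-- `θ ↦ cexp (skellamLogCharFun l l' θ)` is the characteristic function of `V - V'`, for
independent Poisson variables `V`, `V'` of means `l`, `l'`. -/
def skellamLogCharFun (l l' θ : ℝ) : ℂ := l * (cexp (I * θ) - 1) + l' * (cexp (-(I * θ)) - 1)

def gaussianLogCharFun (t v θ : ℝ) : ℂ := I * t * θ - (v : ℂ) / 2 * θ ^ 2

@[fun_prop]
lemma continuous_skellamLogCharFun (l l' : ℝ) : Continuous (skellamLogCharFun l l') := by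
  unfold skellamLogCharFun
  fun_prop

lemma re_skellamLogCharFun (l l' θ : ℝ) :
    (skellamLogCharFun l l' θ).re = (l + l') * (Real.cos θ - 1) := by
  simp only [skellamLogCharFun, add_re, mul_re, ofReal_re, sub_re, exp_re, I_re, zero_mul, I_im,
    ofReal_im, mul_zero, sub_self, Real.exp_zero, mul_im, one_mul, zero_add, one_re, sub_im,
    one_im, sub_zero, neg_re, neg_zero, neg_im, Real.cos_neg]
  ring

lemma re_gaussianLogCharFun (t v θ : ℝ) :
    (gaussianLogCharFun t v θ).re = -(v / 2) * θ ^ 2 := by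
  simp [gaussianLogCharFun, ← ofReal_pow]

lemma cexp_skellamLogCharFun_sub_eq_tsum (l l' θ : ℝ) (a : ℤ) :
    cexp (skellamLogCharFun l l' θ - I * a * θ) = ∑' p : ℕ × ℕ,
      (poisPMF l' p.1 * poisPMF l p.2 : ℂ) * cexp (I * (p.2 - p.1 - a : ℤ) * θ) := by
  rw [skellamLogCharFun, Complex.exp_sub, Complex.exp_add, mul_comm (cexp _),
    ← tsum_poisPMF_mul_pow l, ← tsum_poisPMF_mul_pow l',
    tsum_mul_tsum_of_summable_norm (summable_norm_poisPMF_mul_pow _ _)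
      (summable_norm_poisPMF_mul_pow _ _), ← tsum_div_const]
  congr 1 with p
  have hexp : cexp (I * (p.2 - p.1 - a : ℤ) * θ) * cexp (I * a * θ) =
      cexp (I * θ) ^ p.2 * cexp (-(I * θ)) ^ p.1 := by
    rw [← Complex.exp_nat_mul, ← Complex.exp_nat_mul, ← Complex.exp_add, ← Complex.exp_add]
    push_cast
    ring_nf
  rw [div_eq_iff (Complex.exp_ne_zero _), mul_assoc _ (cexp _), hexp]
  ring

theorem two_pi_mul_PVV_eq_integral {l l' : ℝ} (hl : 0 ≤ l) (hl' : 0 ≤ l') (a : ℤ) :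
    (2 * Real.pi : ℂ) * PVV l l' a =
      ∫ θ in Ioc (-Real.pi) Real.pi, cexp (skellamLogCharFun l l' θ - I * a * θ) := by
  have hvol : volume.real (Ioc (-Real.pi) Real.pi) = 2 * Real.pi := by
    rw [Real.volume_real_Ioc_of_le (by linarith [Real.pi_pos])]
    ring
  have hnorm (p : ℕ × ℕ) (θ : ℝ) :
      ‖(poisPMF l' p.1 * poisPMF l p.2 : ℂ) * cexp (I * (p.2 - p.1 - a : ℤ) * θ)‖ =
        poisPMF l' p.1 * poisPMF l p.2 := by
    rw [norm_mul, mul_assoc I, ← ofReal_intCast, ← ofReal_mul _ θ, norm_exp_I_mul_ofReal,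
      mul_one, ← ofReal_mul, norm_real, Real.norm_of_nonneg
        (mul_nonneg (poisPMF_nonneg_s4 hl' _) (poisPMF_nonneg_s4 hl _))]
  have hterm (p : ℕ × ℕ) : (poisPMF l' p.1 * poisPMF l p.2 : ℂ) *
      ((if (p.2 - p.1 - a : ℤ) = 0 then 2 * Real.pi else 0 : ℝ) : ℂ) =
      ((2 * Real.pi *
        if (p.2 - p.1 - a : ℤ) = 0 then poisPMF l' p.1 * poisPMF l p.2 else 0 : ℝ) : ℂ) := by
    split_ifs <;> push_cast <;> ring
  simp_rw [cexp_skellamLogCharFun_sub_eq_tsum]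
  rw [← integral_tsum_of_summable_integral_norm]
  · simp_rw [integral_const_mul, setIntegral_cexp_int_mul_I, hterm, ← ofReal_tsum, tsum_mul_left,
      ← PVV_eq_tsum_prod hl hl' a]
    push_cast
    rfl
  · exact fun p => Continuous.integrableOn_Ioc (by fun_prop)
  · simp_rw [hnorm, setIntegral_const, hvol, smul_eq_mul]
    exact (summable_poisPMF_mul_poisPMF hl hl').mul_left _

lemma gaussD_neg (v x : ℝ) : gaussD v (-x) = gaussD v x := by
  simp [gaussD]

lemma inv_sqrt_mul_gaussD_one_div_sqrt {v : ℝ} (hv : 0 < v) (x : ℝ) :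
    (Real.sqrt v)⁻¹ * gaussD 1 (x / Real.sqrt v) = gaussD v x := by
  simp only [gaussD, mul_one, div_pow, Real.sq_sqrt hv.le,
    Real.sqrt_mul (by positivity : (0 : ℝ) ≤ 2 * Real.pi)]
  field_simp

lemma integral_cexp_gaussianLogCharFun {v : ℝ} (hv : 0 < v) (t : ℝ) :
    ∫ θ : ℝ, cexp (gaussianLogCharFun t v θ) = 2 * Real.pi * gaussD v t := by
  have hsqrt :
      ((Real.pi : ℂ) / (v / 2)) ^ (1 / 2 : ℂ) = (Real.sqrt (2 * Real.pi / v) : ℂ) := by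
    rw [show (Real.pi : ℂ) / (v / 2) = ((2 * Real.pi / v : ℝ) : ℂ) by push_cast; ring,
      show (1 / 2 : ℂ) = ((1 / 2 : ℝ) : ℂ) by norm_num, ← ofReal_cpow (by positivity),
      Real.sqrt_eq_rpow]
  have hexp : cexp (-(t : ℂ) ^ 2 / (4 * (v / 2))) = (Real.exp (-t ^ 2 / (2 * v)) : ℂ) := by
    push_cast
    ring_nf
  have hconst :
      Real.sqrt (2 * Real.pi / v) = 2 * Real.pi * (Real.sqrt (2 * Real.pi * v))⁻¹ := by
    rw [Real.sqrt_div (by positivity), Real.sqrt_mul (by positivity) v]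
    field_simp
    rw [Real.sq_sqrt (by positivity)]
  simp_rw [gaussianLogCharFun, sub_eq_add_neg, Complex.exp_add, ← neg_mul]
  rw [fourierIntegral_gaussian (by simp [hv]), hsqrt, hexp, hconst, gaussD]
  push_cast
  ring

lemma integrable_cexp_gaussianLogCharFun {v : ℝ} (hv : 0 < v) (t : ℝ) :
    Integrable fun θ => cexp (gaussianLogCharFun t v θ) := by
  refine (integrable_cexp_quadratic (b := (v : ℂ) / 2) (by simp [hv]) (I * t) 0).congr
    (Eventually.of_forall fun θ => ?_)
  simp only [gaussianLogCharFun]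
  ring_nf

lemma norm_le_mul_abs_of_hasDerivAt {E : Type*} [NormedAddCommGroup E] [NormedSpace ℝ E]
    {f f' : ℝ → E} {C θ : ℝ} (hf : ∀ s, HasDerivAt f (f' s) s)
    (hf' : ∀ s, |s| ≤ |θ| → ‖f' s‖ ≤ C) (h0 : f 0 = 0) : ‖f θ‖ ≤ C * |θ| := by
  have h := (convex_Icc (-|θ|) |θ|).norm_image_sub_le_of_norm_hasDerivWithin_le
    (fun s _ => (hf s).hasDerivWithinAt) (fun s hs => hf' s (abs_le.mpr hs))
    ⟨neg_nonpos.mpr (abs_nonneg θ), abs_nonneg θ⟩ ⟨neg_abs_le θ, le_abs_self θ⟩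
  simpa [h0] using h

lemma hasDerivAt_ofReal (s : ℝ) : HasDerivAt (fun s : ℝ => (s : ℂ)) 1 s :=
  (hasDerivAt_id s).ofReal_comp

lemma hasDerivAt_cexp_I_mul (s : ℝ) :
    HasDerivAt (fun s : ℝ => cexp (I * s)) (cexp (I * s) * I) s := by
  simpa using ((hasDerivAt_ofReal s).const_mul I).cexp

lemma norm_cexp_I_mul_sub_one_sub_le (θ : ℝ) : ‖cexp (I * θ) - 1 - I * θ‖ ≤ θ ^ 2 := by
  have h := norm_le_mul_abs_of_hasDerivAt (f := fun s : ℝ => cexp (I * s) - 1 - I * s)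
    (f' := fun s => (cexp (I * s) - 1) * I) (C := |θ|) (θ := θ)
    (fun s => (((hasDerivAt_cexp_I_mul s).sub_const 1).sub
      ((hasDerivAt_ofReal s).const_mul I)).congr_deriv (by ring))
    (fun s hs => by
      rw [norm_mul, norm_I, mul_one]
      exact Real.norm_exp_I_mul_ofReal_sub_one_le.trans (by simpa using hs))
    (by simp)
  simpa [← sq] using h

lemma norm_cexp_I_mul_sub_taylor_le (θ : ℝ) :
    ‖cexp (I * θ) - 1 - I * θ + θ ^ 2 / 2‖ ≤ |θ| ^ 3 := by
  have h := norm_le_mul_abs_of_hasDerivAt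
    (f := fun s : ℝ => cexp (I * s) - 1 - I * s + (s : ℂ) ^ 2 / 2)
    (f' := fun s => (cexp (I * s) - 1 - I * s) * I) (C := θ ^ 2) (θ := θ)
    (fun s => ((((hasDerivAt_cexp_I_mul s).sub_const 1).sub
      ((hasDerivAt_ofReal s).const_mul I)).add
      (((hasDerivAt_ofReal s).pow 2).div_const 2)).congr_deriv
        (by push_cast; linear_combination (s : ℂ) * I_sq))
    (fun s hs => by
      rw [norm_mul, norm_I, mul_one]
      exact (norm_cexp_I_mul_sub_one_sub_le s).trans (sq_le_sq.mpr (by simpa using hs)))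
    (by simp)
  simpa [pow_succ] using h

lemma norm_cexp_sub_cexp_le {z w : ℂ} {c : ℝ} (hz : z.re ≤ c) (hw : w.re ≤ c) :
    ‖cexp z - cexp w‖ ≤ Real.exp c * ‖z - w‖ :=
  (convex_halfSpace_re_le c).norm_image_sub_le_of_norm_hasDerivWithin_le
    (fun x _ => (hasDerivAt_exp x).hasDerivWithinAt)
    (fun x hx => by rw [norm_exp]; exact Real.exp_le_exp.mpr hx) hw hz

lemma norm_skellamLogCharFun_sub_le {l l' : ℝ} (hl : 0 ≤ l) (hl' : 0 ≤ l') (θ : ℝ) :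
    ‖skellamLogCharFun l l' θ - gaussianLogCharFun (l - l') (l + l') θ‖ ≤
      (l + l') * |θ| ^ 3 := by
  have hsplit : skellamLogCharFun l l' θ - gaussianLogCharFun (l - l') (l + l') θ =
      l * (cexp (I * θ) - 1 - I * θ + (θ : ℂ) ^ 2 / 2) +
        l' * (cexp (I * (-θ : ℝ)) - 1 - I * (-θ : ℝ) + ((-θ : ℝ) : ℂ) ^ 2 / 2) := by
    rw [skellamLogCharFun, gaussianLogCharFun]
    push_cast
    ring_nf
  calc _ ≤ l * |θ| ^ 3 + l' * |-θ| ^ 3 := by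
        rw [hsplit]
        refine (norm_add_le _ _).trans (add_le_add ?_ ?_) <;>
          rw [norm_mul, norm_real, Real.norm_of_nonneg (by assumption)] <;>
          gcongr <;> exact norm_cexp_I_mul_sub_taylor_le _
    _ = (l + l') * |θ| ^ 3 := by rw [abs_neg]; ring

lemma norm_cexp_skellam_sub_cexp_gaussian_le {l l' θ : ℝ} (hl : 0 ≤ l) (hl' : 0 ≤ l')
    (a : ℤ) (hθ : |θ| ≤ Real.pi) :
    ‖cexp (skellamLogCharFun l l' θ - I * a * θ) -
        cexp (gaussianLogCharFun (l - l' - a) (l + l') θ)‖ ≤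
      (l + l') * (|θ| ^ 3 * Real.exp (-(2 * (l + l') / Real.pi ^ 2) * θ ^ 2)) := by
  set b := 2 * (l + l') / Real.pi ^ 2
  have hb : b ≤ (l + l') / 2 := by
    have hπ : (4 : ℝ) ≤ Real.pi ^ 2 := by nlinarith [Real.pi_gt_three]
    rw [div_le_div_iff₀ (by positivity) (by norm_num)]
    nlinarith [mul_le_mul_of_nonneg_left hπ (add_nonneg hl hl')]
  have hcos : (l + l') * (Real.cos θ - 1) ≤ -b * θ ^ 2 := by
    have := mul_le_mul_of_nonneg_left (sub_le_iff_le_add'.mpr (Real.cos_le_one_sub_mul_cos_sq hθ))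
      (by positivity : 0 ≤ l + l')
    linarith [show (l + l') * (1 - 2 / Real.pi ^ 2 * θ ^ 2 - 1) = -b * θ ^ 2 by ring]
  have hre₁ : (skellamLogCharFun l l' θ - I * a * θ).re ≤ -b * θ ^ 2 := by
    rwa [sub_re, re_skellamLogCharFun, show (I * a * θ).re = 0 by simp, sub_zero]
  have hre₂ : (gaussianLogCharFun (l - l' - a) (l + l') θ).re ≤ -b * θ ^ 2 := by
    rw [re_gaussianLogCharFun]
    nlinarith [sq_nonneg θ]
  have hdiff : (skellamLogCharFun l l' θ - I * a * θ) -
      gaussianLogCharFun (l - l' - a) (l + l') θ =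
      skellamLogCharFun l l' θ - gaussianLogCharFun (l - l') (l + l') θ := by
    simp only [gaussianLogCharFun]
    push_cast
    ring
  calc _ ≤ Real.exp (-b * θ ^ 2) * ((l + l') * |θ| ^ 3) := by
        refine (norm_cexp_sub_cexp_le hre₁ hre₂).trans ?_
        rw [hdiff]
        gcongr
        exact norm_skellamLogCharFun_sub_le hl hl' θ
    _ = _ := by ring

lemma integrable_abs_pow_mul_exp_neg_mul_sq {b : ℝ} (hb : 0 < b) (n : ℕ) :
    Integrable fun x : ℝ => |x| ^ n * Real.exp (-b * x ^ 2) := by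
  refine (integrable_rpow_mul_exp_neg_mul_sq hb (s := n)
    (by linarith [n.cast_nonneg (α := ℝ)])).norm.congr (Eventually.of_forall fun x => ?_)
  simp [Real.rpow_natCast]

lemma integral_abs_pow_mul_exp_neg_mul_sq {b : ℝ} (hb : 0 < b) (n : ℕ) :
    ∫ x : ℝ, |x| ^ n * Real.exp (-b * x ^ 2) =
      b ^ (-((n : ℝ) + 1) / 2) * Real.Gamma ((n + 1) / 2) := by
  have hIoi : ∫ x in Ioi (0 : ℝ), x ^ n * Real.exp (-b * x ^ 2) =
      ∫ x in Ioi (0 : ℝ), x ^ (n : ℝ) * Real.exp (-b * x ^ (2 : ℝ)) :=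
    setIntegral_congr_fun measurableSet_Ioi fun x _ => by rw [Real.rpow_natCast, Real.rpow_two]
  have h := integral_comp_abs (f := fun x : ℝ => x ^ n * Real.exp (-b * x ^ 2))
  simp only [sq_abs] at h
  rw [h, hIoi, _root_.integral_rpow_mul_exp_neg_mul_rpow two_pos
    (by linarith [n.cast_nonneg (α := ℝ)]) hb]
  ring

lemma integral_abs_pow_three_mul_exp_neg_mul_sq {b : ℝ} (hb : 0 < b) :
    ∫ x : ℝ, |x| ^ 3 * Real.exp (-b * x ^ 2) = (b ^ 2)⁻¹ := by
  rw [integral_abs_pow_mul_exp_neg_mul_sq hb]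
  norm_num [Real.Gamma_two, Real.rpow_neg hb.le]

lemma integral_abs_mul_exp_neg_mul_sq {b : ℝ} (hb : 0 < b) :
    ∫ x : ℝ, |x| * Real.exp (-b * x ^ 2) = b⁻¹ := by
  simpa [Real.rpow_neg_one] using integral_abs_pow_mul_exp_neg_mul_sq hb 1

lemma two_pi_mul_PVV_sub_gaussD_eq_integral {l l' : ℝ} (hl : 0 ≤ l) (hl' : 0 ≤ l')
    (hm : 0 < l + l') (a : ℤ) :
    ((2 * Real.pi * (PVV l l' a - gaussD (l + l') (l - l' - a)) : ℝ) : ℂ) =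
      ∫ θ, ((Ioc (-Real.pi) Real.pi).indicator
        (fun θ => cexp (skellamLogCharFun l l' θ - I * a * θ)) θ -
          cexp (gaussianLogCharFun (l - l' - a) (l + l') θ)) := by
  have hF : Integrable ((Ioc (-Real.pi) Real.pi).indicator
      fun θ => cexp (skellamLogCharFun l l' θ - I * a * θ)) :=
    (Continuous.integrableOn_Ioc (by fun_prop)).integrable_indicator
      measurableSet_Ioc
  rw [integral_sub hF (integrable_cexp_gaussianLogCharFun hm _),
    integral_indicator measurableSet_Ioc, ← two_pi_mul_PVV_eq_integral hl hl',
    integral_cexp_gaussianLogCharFun hm]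
  push_cast
  ring

lemma norm_indicator_skellam_sub_gaussian_le {l l' : ℝ} (hl : 0 ≤ l) (hl' : 0 ≤ l') (a : ℤ)
    (θ : ℝ) :
    ‖(Ioc (-Real.pi) Real.pi).indicator
          (fun θ => cexp (skellamLogCharFun l l' θ - I * a * θ)) θ -
        cexp (gaussianLogCharFun (l - l' - a) (l + l') θ)‖ ≤
      (l + l') * (|θ| ^ 3 * Real.exp (-(2 * (l + l') / Real.pi ^ 2) * θ ^ 2)) +
        Real.pi⁻¹ * (|θ| * Real.exp (-((l + l') / 2) * θ ^ 2)) := by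
  have hπ := Real.pi_pos
  by_cases hθ : θ ∈ Ioc (-Real.pi) Real.pi
  · rw [indicator_of_mem hθ]
    refine (norm_cexp_skellam_sub_cexp_gaussian_le hl hl' a
      (abs_le.mpr ⟨hθ.1.le, hθ.2⟩)).trans (le_add_of_nonneg_right (by positivity))
  · have hπθ : Real.pi ≤ |θ| := by
      simp only [mem_Ioc, not_and_or, not_lt, not_le] at hθ
      rcases hθ with h | h
      · exact (le_neg.mpr h).trans (neg_le_abs θ)
      · exact h.le.trans (le_abs_self θ)
    have hone : 1 ≤ Real.pi⁻¹ * |θ| := by rwa [inv_mul_eq_div, one_le_div hπ]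
    rw [indicator_of_notMem hθ, zero_sub, norm_neg, norm_exp, re_gaussianLogCharFun,
      ← mul_assoc Real.pi⁻¹]
    exact le_add_of_nonneg_of_le (by positivity) (le_mul_of_one_le_left (by positivity) hone)

theorem abs_PVV_sub_gaussD_le {l l' : ℝ} (hl : 0 ≤ l) (hl' : 0 ≤ l') (hm : 0 < l + l')
    (a : ℤ) :
    |PVV l l' a - gaussD (l + l') (l - l' - a)| ≤
      (Real.pi ^ 3 / 8 + 1 / Real.pi ^ 2) / (l + l') := by
  have hcubic := (integrable_abs_pow_mul_exp_neg_mul_sq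
    (by positivity : 0 < 2 * (l + l') / Real.pi ^ 2) 3).const_mul (l + l')
  have hlinear : Integrable fun θ : ℝ =>
      Real.pi⁻¹ * (|θ| * Real.exp (-((l + l') / 2) * θ ^ 2)) := by
    simpa only [pow_one] using (integrable_abs_pow_mul_exp_neg_mul_sq
      (by positivity : 0 < (l + l') / 2) 1).const_mul Real.pi⁻¹
  have hnorm := norm_integral_le_of_norm_le (hcubic.add hlinear)
    (Eventually.of_forall (norm_indicator_skellam_sub_gaussian_le hl hl' a))
  rw [← two_pi_mul_PVV_sub_gaussD_eq_integral hl hl' hm, norm_real, Real.norm_eq_abs, abs_mul,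
    abs_of_pos (by positivity : 0 < 2 * Real.pi), integral_add' hcubic hlinear,
    integral_const_mul, integral_const_mul,
    integral_abs_pow_three_mul_exp_neg_mul_sq (by positivity),
    integral_abs_mul_exp_neg_mul_sq (by positivity)] at hnorm
  have hconst :
      (l + l') * ((2 * (l + l') / Real.pi ^ 2) ^ 2)⁻¹ + Real.pi⁻¹ * ((l + l') / 2)⁻¹ =
      2 * Real.pi * ((Real.pi ^ 3 / 8 + 1 / Real.pi ^ 2) / (l + l')) := by
    field_simp
    ring
  rw [hconst] at hnorm
  exact le_of_mul_le_mul_left hnorm (by positivity)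

theorem stmt4 :
    ∃ C : ℝ, 0 < C ∧
      ∀ l l' : ℝ, 0 < l → 0 < l' → ∀ a : ℤ,
        |PVV l l' a -
          (Real.sqrt (l + l'))⁻¹ * gaussD 1 ((-l + l' + (a : ℝ)) / Real.sqrt (l + l'))| ≤
        C / (l + l') := by
  refine ⟨Real.pi ^ 3 / 8 + 1 / Real.pi ^ 2, by positivity, fun l l' hl hl' a => ?_⟩
  have hm : 0 < l + l' := add_pos hl hl'
  rw [inv_sqrt_mul_gaussD_one_div_sqrt hm, ← gaussD_neg,
    show -(-l + l' + (a : ℝ)) = l - l' - a by ring]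
  exact abs_PVV_sub_gaussD_le hl.le hl'.le hm a
end
end

section
/- There exists a universal constant C > 0 such that for all p ∈ (0,1) and all u ∈ ℝ with |u| ≤ 1, | Log ψ_p(u) + p(1−p)u²/2 | ≤ C·p(1−p)·|u|³, where Log denotes the principal branch of the complex logarithm (well defined since |ψ_p(u) − 1| < 1 for |u| ≤ 1). -/
open MeasureTheory Filter Set

noncomputable section

/-- The characteristic function `ψ_p(u)` of a centered Bernoulli(`p`) variable. -/
def psiB (p u : ℝ) : ℂ :=
  (p : ℂ) * Complex.exp (Complex.I * (u : ℂ) * ((1 - p : ℝ) : ℂ)) +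
    ((1 - p : ℝ) : ℂ) * Complex.exp (-(Complex.I * (u : ℂ) * (p : ℂ)))

lemma exp3aux (x : ℂ) (hx : ‖x‖ ≤ 1) :
    ‖Complex.exp x - (1 + x + x ^ 2 / 2)‖ ≤ ‖x‖ ^ 3 * (2 / 9) := by
  have h := Complex.exp_bound hx (n := 3) (by norm_num)
  have hs : (∑ m ∈ Finset.range 3, x ^ m / m.factorial) = 1 + x + x ^ 2 / 2 := by
    simp [Finset.sum_range_succ]
  rw [hs] at h
  norm_num [Nat.factorial] at h
  convert h using 2


set_option maxHeartbeats 800000 in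
theorem stmt11 :
    ∃ C : ℝ, 0 < C ∧
      ∀ (p u : ℝ), 0 < p → p < 1 → |u| ≤ 1 →
        ‖Complex.log (psiB p u) + ((p * (1 - p) * u ^ 2 / 2 : ℝ) : ℂ)‖ ≤
          C * (p * (1 - p)) * |u| ^ 3 := by
  refine ⟨1, one_pos, fun p u hp hp1 hu => ?_⟩
  have hq0 : (0:ℝ) < 1 - p := by linarith
  set q : ℝ := 1 - p with hqdef
  clear_value q
  have hu0 : (0:ℝ) ≤ |u| := abs_nonneg u
  have hpq4 : p * q ≤ 1 / 4 := by rw [hqdef]; nlinarith [sq_nonneg (1 - 2 * p)]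
  have hpq0 : 0 < p * q := mul_pos hp hq0
  have hu2 : u ^ 2 ≤ 1 := by nlinarith [_root_.sq_abs u]
  have hu3 : |u| ^ 3 ≤ u ^ 2 := by
    calc |u| ^ 3 = |u| ^ 2 * |u| := by ring
      _ ≤ |u| ^ 2 * 1 := by gcongr
      _ = u ^ 2 := by rw [mul_one, _root_.sq_abs]
  have hu4 : (u ^ 2) ^ 2 ≤ |u| ^ 3 := by
    calc (u ^ 2) ^ 2 = |u| ^ 3 * |u| := by rw [← _root_.sq_abs u]; ring
      _ ≤ |u| ^ 3 * 1 := by gcongr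
      _ = |u| ^ 3 := mul_one _
  have hu30 : (0:ℝ) ≤ |u| ^ 3 := pow_nonneg hu0 3
  set ψ : ℂ := psiB p u with hψdef
  set w : ℂ := ψ - 1 with hw
  set c : ℂ := ((p * q * u ^ 2 / 2 : ℝ) : ℂ) with hc
  set x₁ : ℂ := Complex.I * (u : ℂ) * ((1 - p : ℝ) : ℂ) with hx1
  set x₂ : ℂ := -(Complex.I * (u : ℂ) * (p : ℂ)) with hx2
  clear_value ψ w c x₁ x₂
  have hax1 : ‖x₁‖ = |u| * q := by
    rw [hx1, norm_mul, norm_mul, Complex.norm_I, Complex.norm_real, Complex.norm_real,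
      one_mul, Real.norm_eq_abs, Real.norm_eq_abs, _root_.abs_of_pos (show (0:ℝ) < 1 - p by linarith), ← hqdef]
  have hax2 : ‖x₂‖ = |u| * p := by
    rw [hx2, norm_neg, norm_mul, norm_mul, Complex.norm_I, Complex.norm_real,
      Complex.norm_real, one_mul, Real.norm_eq_abs, Real.norm_eq_abs, _root_.abs_of_pos hp]
  have hax1' : ‖x₁‖ ≤ 1 := by rw [hax1, hqdef]; nlinarith
  have hax2' : ‖x₂‖ ≤ 1 := by rw [hax2]; nlinarith
  have e1 := exp3aux x₁ hax1'
  have e2 := exp3aux x₂ hax2'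
  have hid : w + c = (p : ℂ) * (Complex.exp x₁ - (1 + x₁ + x₁ ^ 2 / 2)) +
      ((1 - p : ℝ) : ℂ) * (Complex.exp x₂ - (1 + x₂ + x₂ ^ 2 / 2)) := by
    rw [hw, hψdef, hc, hx1, hx2, psiB, hqdef]
    push_cast
    linear_combination ((p : ℂ) * (1 - (p : ℂ)) * (u : ℂ) ^ 2 / 2) * Complex.I_sq
  have hsq1 : p ^ 2 + q ^ 2 ≤ 1 := by rw [hqdef]; nlinarith
  have hA : ‖w + c‖ ≤ 2 / 9 * (p * q) * |u| ^ 3 := by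
    rw [hid]
    calc ‖_‖ ≤ ‖(p : ℂ) * (Complex.exp x₁ - (1 + x₁ + x₁ ^ 2 / 2))‖
        + ‖((1 - p : ℝ) : ℂ) * (Complex.exp x₂ - (1 + x₂ + x₂ ^ 2 / 2))‖ :=
          norm_add_le _ _
      _ ≤ p * (‖x₁‖ ^ 3 * (2 / 9)) + q * (‖x₂‖ ^ 3 * (2 / 9)) := by
          rw [norm_mul, norm_mul, Complex.norm_real, Complex.norm_real,
            Real.norm_eq_abs, Real.norm_eq_abs,
            _root_.abs_of_pos hp,
            show |1 - p| = q by
              rw [_root_.abs_of_pos (show (0:ℝ) < 1 - p by linarith), hqdef]]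
          gcongr
      _ ≤ 2 / 9 * (p * q) * |u| ^ 3 := by
          rw [hax1, hax2]
          nlinarith [mul_nonneg (mul_nonneg hpq0.le hu30)
            (by linarith : (0:ℝ) ≤ 1 - (p ^ 2 + q ^ 2)), hpq0, hu30]
  have hcabs : ‖c‖ = p * q * u ^ 2 / 2 := by
    rw [hc, hqdef, Complex.norm_real, Real.norm_eq_abs]
    exact _root_.abs_of_nonneg (div_nonneg
      (mul_nonneg (mul_nonneg hp.le (by linarith)) (sq_nonneg u)) (by norm_num))
  have hW : ‖w‖ ≤ p * q * u ^ 2 := by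
    have h := norm_add_le (w + c) (-c)
    rw [add_neg_cancel_right, norm_neg] at h
    rw [hcabs] at h
    nlinarith [mul_nonneg hpq0.le (sub_nonneg.2 hu3), mul_nonneg hpq0.le (sq_nonneg u), hA]
  have hW4 : ‖w‖ ≤ 1 / 4 :=
    hW.trans (by nlinarith [sq_nonneg u, mul_nonneg hpq0.le (sub_nonneg.2 hu2)])
  have hWlt : ‖w‖ < 1 := by linarith
  have hlog := Complex.norm_log_one_add_sub_self_le hWlt
  have h1w : (1 : ℂ) + w = ψ := by rw [hw]; ring
  rw [h1w] at hlog
  have h34 : (3:ℝ) / 4 ≤ 1 - ‖w‖ := by linarith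
  have hinv : (1 - ‖w‖)⁻¹ ≤ 4 / 3 := by
    rw [show (4:ℝ) / 3 = ((3:ℝ) / 4)⁻¹ by norm_num]
    exact inv_anti₀ (by norm_num) h34
  have hinv0 : (0:ℝ) ≤ (1 - ‖w‖)⁻¹ := inv_nonneg.2 (by linarith)
  have hB : ‖Complex.log ψ - w‖ ≤ 1 / 6 * (p * q) * |u| ^ 3 := by
    have h1 : ‖w‖ ^ 2 ≤ (p * q * u ^ 2) ^ 2 := by
      exact pow_le_pow_left₀ (norm_nonneg w) hW 2
    have h2 : ‖w‖ ^ 2 * (1 - ‖w‖)⁻¹ ≤ (p * q * u ^ 2) ^ 2 * (4 / 3) :=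
      mul_le_mul h1 hinv hinv0 (sq_nonneg _)
    have h3 : (p * q * u ^ 2) ^ 2 * (4 / 3) / 2 ≤ 1 / 6 * (p * q) * |u| ^ 3 := by
      nlinarith [mul_nonneg (mul_nonneg hpq0.le (by linarith : (0:ℝ) ≤ 1 / 4 - p * q))
          (pow_nonneg (sq_nonneg u) 2),
        mul_nonneg hpq0.le (sub_nonneg.2 hu4)]
    calc ‖Complex.log ψ - w‖ = ‖Complex.log ψ - w‖ := rfl
      _ ≤ ‖w‖ ^ 2 * (1 - ‖w‖)⁻¹ / 2 := hlog
      _ ≤ (p * q * u ^ 2) ^ 2 * (4 / 3) / 2 := by linarith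
      _ ≤ 1 / 6 * (p * q) * |u| ^ 3 := h3
  calc ‖Complex.log ψ + c‖
      = ‖(Complex.log ψ - w) + (w + c)‖ := by congr 1; ring
    _ ≤ ‖Complex.log ψ - w‖ + ‖w + c‖ := norm_add_le _ _
    _ ≤ 1 / 6 * (p * q) * |u| ^ 3 + 2 / 9 * (p * q) * |u| ^ 3 := add_le_add hB hA
    _ ≤ 1 * (p * q) * |u| ^ 3 := by nlinarith [mul_nonneg hpq0.le hu30]
end
end

section
/- Fix η ∈ (0,1/2) and set ℓ_N := N^{−(1/2+η)}. For all 0 < T₀ < 1 < T₁ < ∞ there exists a constant C(T₀,T₁) ∈ (0,∞) such that whenever (x,y,s,t,N) satisfies the primary condition over [T₀,T₁] and x ≠ y, ∫_{s·ℓ_N}^{s} | ∏_{j=1,2} g(σ_j(r)²; μ_j(r)) − 1_{[1,∞)}(Nr)/(4πr) | dr ≤ C(T₀,T₁)·( 1 + |x|² + |y|² + |ln|x−y|| ). -/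
open MeasureTheory Filter Set

noncomputable section

lemma aux_prod (v m1 m2 : ℝ) (hv : 0 ≤ v) :
    gaussD v m1 * gaussD v m2
      = (2 * Real.pi * v)⁻¹ * Real.exp (-(m1 ^ 2 + m2 ^ 2) / (2 * v)) := by
  unfold gaussD
  rw [show (Real.sqrt (2*Real.pi*v))⁻¹ * Real.exp (-m1^2/(2*v)) *
      ((Real.sqrt (2*Real.pi*v))⁻¹ * Real.exp (-m2^2/(2*v)))
      = (Real.sqrt (2*Real.pi*v) * Real.sqrt (2*Real.pi*v))⁻¹ *
        (Real.exp (-m1^2/(2*v)) * Real.exp (-m2^2/(2*v))) by rw [mul_inv]; ring]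
  rw [Real.mul_self_sqrt (by positivity), ← Real.exp_add]
  congr 1
  ring

lemma aux_inv_exp (c w : ℝ) (hc : 0 ≤ c) (hw : 0 ≤ w) :
    c⁻¹ * Real.exp (-(w / c)) ≤ (c + w)⁻¹ := by
  rcases eq_or_lt_of_le hc with h | hc0
  · simp [← h]
    positivity
  · rw [Real.exp_neg]
    rw [show c⁻¹ * (Real.exp (w/c))⁻¹ = (c * Real.exp (w/c))⁻¹ by rw [mul_inv]]
    apply inv_anti₀ (by positivity)
    have h1 : 1 + w / c ≤ Real.exp (w / c) := by
      have := Real.add_one_le_exp (w / c); linarith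
    calc c + w = c * (1 + w / c) := by field_simp
    _ ≤ c * Real.exp (w / c) := by nlinarith [Real.exp_pos (w/c)]

lemma aux_near (c u : ℝ) (hc1 : 1 ≤ c) (hc2 : c ≤ 2) (hu : 0 ≤ u) :
    |c⁻¹ * Real.exp (-u) - 2⁻¹| ≤ (2 - c) / 2 + u / 2 := by
  have hc0 : (0:ℝ) < c := by linarith
  have hE1 : Real.exp (-u) ≤ 1 := Real.exp_le_one_iff.mpr (by linarith)
  have hE2 : 1 - u ≤ Real.exp (-u) := by have := Real.add_one_le_exp (-u); linarith
  have hE0 : 0 < Real.exp (-u) := Real.exp_pos _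
  have key : c⁻¹ * Real.exp (-u) - 2⁻¹
      = (c⁻¹ - 2⁻¹) * Real.exp (-u) + (Real.exp (-u) - 1) / 2 := by ring
  rw [key]
  have h1 : |(c⁻¹ - 2⁻¹) * Real.exp (-u)| ≤ (2 - c) / 2 := by
    rw [abs_mul, abs_of_pos hE0]
    have h2 : |c⁻¹ - 2⁻¹| = (2 - c) / (2 * c) := by
      rw [abs_of_nonneg]
      · field_simp
      · rw [sub_nonneg]
        apply inv_anti₀ hc0 hc2
    rw [h2]
    calc (2 - c) / (2 * c) * Real.exp (-u) ≤ (2 - c) / (2 * c) * 1 := by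
          apply mul_le_mul_of_nonneg_left hE1
          apply div_nonneg (by linarith) (by positivity)
    _ ≤ (2 - c) / 2 := by
          rw [mul_one, div_le_div_iff₀ (by positivity) (by norm_num)]
          nlinarith
  have h2 : |(Real.exp (-u) - 1) / 2| ≤ u / 2 := by
    rw [abs_div, abs_of_nonneg (by norm_num : (0:ℝ) ≤ 2), div_le_div_iff_of_pos_right]
    · rw [abs_le]; constructor <;> linarith
    · norm_num
  calc _ ≤ |(c⁻¹ - 2⁻¹) * Real.exp (-u)| + |(Real.exp (-u) - 1) / 2| := abs_add_le _ _
  _ ≤ _ := by linarith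

lemma aux_logint (q m : ℝ) (hp : 0 < q) (hm : 0 < m) :
    ∫ r in (q/2)..q, (2 * (q - r) + m)⁻¹
      = (Real.log (q + m) - Real.log m) / 2 := by
  have key : ∀ r ∈ Set.uIcc (q/2) q, HasDerivAt (fun r => -(Real.log (2 * (q - r) + m)) / 2)
      ((2 * (q - r) + m)⁻¹) r := by
    intro r hr
    rw [Set.uIcc_of_le (by linarith)] at hr
    have hpos : 0 < 2 * (q - r) + m := by
      have := hr.2; nlinarith
    have h1 : HasDerivAt (fun r : ℝ => 2 * (q - r) + m) (-2) r := by
      simpa using ((((hasDerivAt_id r).const_sub q)).const_mul 2).add_const m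
    have h2 := (Real.hasDerivAt_log hpos.ne').comp r h1
    have h3 := h2.div_const (-2)
    rw [show (2 * (q - r) + m)⁻¹ * (-2) / (-2) = (2 * (q - r) + m)⁻¹ by
      rw [mul_div_cancel_right₀ _ (by norm_num : (-2:ℝ) ≠ 0)]] at h3
    have hfe : (fun x => (Real.log ∘ fun r => 2 * (q - r) + m) x / (-2))
        = fun r => -(Real.log (2 * (q - r) + m)) / 2 := by
      funext z; simp [Function.comp]; ring
    rwa [hfe] at h3
  rw [intervalIntegral.integral_eq_sub_of_hasDerivAt key ?_]
  · rw [show 2 * (q - q) + m = m by ring, show 2 * (q - q/2) + m = q + m by ring]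
    ring
  · apply ContinuousOn.intervalIntegrable
    apply ContinuousOn.inv₀
    · fun_prop
    · intro r hr
      rw [Set.uIcc_of_le (by linarith)] at hr
      have := hr.2; nlinarith

set_option maxHeartbeats 1000000 in
theorem stmt15 (η : ℝ) (hη : 0 < η) (hη' : η < 1 / 2) (T0 T1 : ℝ)
    (hT0 : 0 < T0) (hT01 : T0 < 1) (hT1 : 1 < T1) :
    ∃ C : ℝ, 0 < C ∧
      ∀ (x y : ℝ × ℝ) (s t : ℝ) (N : ℕ), primaryCond η T0 T1 x y s t N → x ≠ y →
        (∫ r in (s * (N : ℝ) ^ (-(1 / 2 + η)))..s,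
          |gaussD (r * (2 - r / s - r / t)) ((x.1 - y.1) * r) *
              gaussD (r * (2 - r / s - r / t)) ((x.2 - y.2) * r) -
            ind1 ((N : ℝ) * r) / (4 * Real.pi * r)|) ≤
        C * (1 + (x.1 ^ 2 + x.2 ^ 2) + (y.1 ^ 2 + y.2 ^ 2) + |Real.log (enorm2 x y)|) := by
  have hlogT1 : 0 < Real.log T1 := Real.log_pos hT1
  refine ⟨T1/T0 + 2*Real.log T1 + |Real.log (T0^2/4)| + T1 + 2, by
    have h2 := abs_nonneg (Real.log (T0^2/4))
    have h3 : 0 < T1/T0 := by positivity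
    linarith, ?_⟩
  intro x y s t N hpc hxy
  obtain ⟨hx1, hx2, hy1, hy2, hs, hst, htT, hN, hfl⟩ := hpc
  have hs0 : 0 < s := lt_of_lt_of_le hT0 hs
  have ht0 : 0 < t := lt_of_lt_of_le hs0 hst
  have hsT1 : s ≤ T1 := le_trans hst htT
  have hNr : (16:ℝ) ≤ (N:ℝ) := by exact_mod_cast hN
  have hN0 : (0:ℝ) < (N:ℝ) := by linarith
  have hπ := Real.pi_gt_three
  have hπ0 := Real.pi_pos
  -- notation
  set a : ℝ := (x.1 - y.1)^2 + (x.2 - y.2)^2 with ha_def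
  have ha : 0 < a := by
    have hne : x.1 ≠ y.1 ∨ x.2 ≠ y.2 := by
      by_contra h
      push_neg at h
      exact hxy (Prod.ext h.1 h.2)
    rcases hne with h | h
    · have h' : x.1 - y.1 ≠ 0 := sub_ne_zero.mpr h
      have : 0 < (x.1 - y.1)^2 := by positivity
      nlinarith [sq_nonneg (x.2 - y.2)]
    · have h' : x.2 - y.2 ≠ 0 := sub_ne_zero.mpr h
      have : 0 < (x.2 - y.2)^2 := by positivity
      nlinarith [sq_nonneg (x.1 - y.1)]
  set L : ℝ := s * (N : ℝ) ^ (-(1 / 2 + η)) with hL_def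
  set X : ℝ := x.1^2 + x.2^2 with hX_def
  set Y : ℝ := y.1^2 + y.2^2 with hY_def
  set W : ℝ := |Real.log (enorm2 x y)| with hW_def
  set m : ℝ := a * s^2 / 4 with hm_def
  have hm0 : 0 < m := by positivity
  -- bounds on L
  have hsqrt16 : (16:ℝ) ^ ((1:ℝ)/2) = 4 := by
    rw [show (16:ℝ) = 4^(2:ℕ) by norm_num, ← Real.rpow_natCast (4:ℝ) 2,
      ← Real.rpow_mul (by norm_num)]
    norm_num
  have hexp : (N:ℝ) ^ (-(1 / 2 + η)) ≤ 1/4 := by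
    have h1 : (N:ℝ) ^ (-(1 / 2 + η)) ≤ (N:ℝ) ^ (-((1:ℝ)/2)) :=
      Real.rpow_le_rpow_of_exponent_le (by linarith) (by linarith)
    have h2 : (N:ℝ) ^ (-((1:ℝ)/2)) = ((N:ℝ) ^ ((1:ℝ)/2))⁻¹ := Real.rpow_neg hN0.le _
    have h3 : (4:ℝ) ≤ (N:ℝ) ^ ((1:ℝ)/2) := by
      rw [← hsqrt16]
      exact Real.rpow_le_rpow (by norm_num) hNr (by norm_num)
    have h4 : ((N:ℝ) ^ ((1:ℝ)/2))⁻¹ ≤ 4⁻¹ := inv_anti₀ (by norm_num) h3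
    rw [h2] at h1
    calc (N:ℝ) ^ (-(1 / 2 + η)) ≤ ((N:ℝ) ^ ((1:ℝ)/2))⁻¹ := h1
    _ ≤ 4⁻¹ := h4
    _ = 1/4 := by norm_num
  have hL0 : 0 < L := by
    rw [hL_def]; positivity
  have hLs2 : L ≤ s/2 := by
    rw [hL_def]
    calc s * (N:ℝ) ^ (-(1 / 2 + η)) ≤ s * (1/4) :=
          mul_le_mul_of_nonneg_left hexp hs0.le
    _ ≤ s/2 := by linarith
  have hLs : L ≤ s := by linarith
  -- N * r ≥ 1 on [L, s]
  have hNL : (1:ℝ) ≤ (N:ℝ) * L := by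
    have hNL1 : (N:ℝ) * L = s * (N:ℝ) ^ ((1:ℝ)/2 - η) := by
      rw [hL_def, show ((1:ℝ)/2 - η) = 1 + (-(1/2 + η)) by ring,
        Real.rpow_add hN0, Real.rpow_one]
      ring
    have hfl' : (1:ℝ) ≤ T0 * (N:ℝ) ^ ((1:ℝ)/2 - η) / 2 := by
      have := Int.le_floor.mp hfl
      exact_mod_cast this
    have hge : T0 * (N:ℝ) ^ ((1:ℝ)/2 - η) ≤ s * (N:ℝ) ^ ((1:ℝ)/2 - η) :=
      mul_le_mul_of_nonneg_right hs (Real.rpow_nonneg hN0.le _)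
    rw [hNL1]
    linarith
  have hind : ∀ r : ℝ, L ≤ r → ind1 ((N:ℝ) * r) = 1 := by
    intro r hr
    have : (1:ℝ) ≤ (N:ℝ) * r := by
      calc (1:ℝ) ≤ (N:ℝ) * L := hNL
      _ ≤ (N:ℝ) * r := mul_le_mul_of_nonneg_left hr hN0.le
    simp [ind1, this]
  -- the integrand
  set F : ℝ → ℝ := fun r =>
    |gaussD (r * (2 - r / s - r / t)) ((x.1 - y.1) * r) *
        gaussD (r * (2 - r / s - r / t)) ((x.2 - y.2) * r) -
      ind1 ((N : ℝ) * r) / (4 * Real.pi * r)| with hF_def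
  by_cases hI : IntervalIntegrable F volume L s
  case neg =>
    rw [intervalIntegral.integral_undef hI]
    have h0 : (0:ℝ) ≤ 1 + X + Y + W := by positivity
    positivity
  case pos =>
  -- rewrite F r
  have hFr : ∀ r : ℝ, 0 < r → L ≤ r → r ≤ s →
      F r = |(2*Real.pi*(r*(2 - r/s - r/t)))⁻¹ *
        Real.exp (-(a*r^2) / (2*(r*(2 - r/s - r/t)))) - 1/(4*Real.pi*r)| := by
    intro r hr0 hrL hrs
    have hc0 : 0 ≤ 2 - r/s - r/t := by
      have h1 : r/s ≤ 1 := (div_le_one hs0).mpr hrs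
      have h2 : r/t ≤ 1 := (div_le_one ht0).mpr (le_trans hrs hst)
      linarith
    have hv0 : 0 ≤ r * (2 - r/s - r/t) := mul_nonneg hr0.le hc0
    rw [hF_def]
    simp only []
    rw [aux_prod _ _ _ hv0, hind r hrL,
      show ((x.1 - y.1)*r)^2 + ((x.2 - y.2)*r)^2 = a * r^2 by rw [ha_def]; ring]
  set C : ℝ := T1/T0 + 2*Real.log T1 + |Real.log (T0^2/4)| + T1 + 2 with hC_def
  set K1 : ℝ := (2*Real.pi)⁻¹ * (1/T0 + a/4) with hK1_def
  -- pointwise bound on [L, s/2]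
  have h1 : ∀ r ∈ Set.Icc L (s/2), F r ≤ K1 := by
    intro r hr
    obtain ⟨hrL, hrs2⟩ := hr
    have hr0 : 0 < r := lt_of_lt_of_le hL0 hrL
    have hrs : r ≤ s := by linarith
    rw [hFr r hr0 hrL hrs]
    have hrs' : r/s ≤ 1/2 := by rw [div_le_iff₀ hs0]; linarith
    have hrt' : r/t ≤ r/s := div_le_div_of_nonneg_left hr0.le hs0 hst
    have hrt0 : 0 ≤ r/t := by positivity
    have hrs0 : 0 ≤ r/s := by positivity
    set c : ℝ := 2 - r/s - r/t with hc_def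
    have hc1 : 1 ≤ c := by rw [hc_def]; linarith
    have hc2 : c ≤ 2 := by rw [hc_def]; linarith
    have hc0 : 0 < c := by linarith
    have e0 : -(a*r^2) / (2*(r*c)) = -(a*r/(2*c)) := by
      rw [neg_div, show a*r^2 = r*(a*r) by ring, show 2*(r*c) = r*(2*c) by ring,
        mul_div_mul_left _ _ hr0.ne']
    have e1 : (2*Real.pi*(r*c))⁻¹ = (2*Real.pi*r)⁻¹ * c⁻¹ := by
      rw [show 2*Real.pi*(r*c) = (2*Real.pi*r)*c by ring, mul_inv]
    have e2 : 1/(4*Real.pi*r) = (2*Real.pi*r)⁻¹ * 2⁻¹ := by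
      rw [one_div, show 4*Real.pi*r = (2*Real.pi*r)*2 by ring, mul_inv]
    rw [e0, e1, e2, show (2*Real.pi*r)⁻¹ * c⁻¹ * Real.exp (-(a*r/(2*c)))
        - (2*Real.pi*r)⁻¹ * 2⁻¹
        = (2*Real.pi*r)⁻¹ * (c⁻¹ * Real.exp (-(a*r/(2*c))) - 2⁻¹) by ring,
      abs_mul, abs_of_pos (show (0:ℝ) < (2*Real.pi*r)⁻¹ by positivity)]
    have hu0 : 0 ≤ a*r/(2*c) := by positivity
    have hb := aux_near c (a*r/(2*c)) hc1 hc2 hu0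
    calc (2*Real.pi*r)⁻¹ * |c⁻¹ * Real.exp (-(a*r/(2*c))) - 2⁻¹|
        ≤ (2*Real.pi*r)⁻¹ * ((2-c)/2 + (a*r/(2*c))/2) :=
          mul_le_mul_of_nonneg_left hb (by positivity)
      _ ≤ (2*Real.pi*r)⁻¹ * (r/T0 + a*r/4) := by
          apply mul_le_mul_of_nonneg_left _ (by positivity)
          have hA : (2-c)/2 ≤ r/T0 := by
            rw [hc_def]
            have h1' : r/s ≤ r/T0 := div_le_div_of_nonneg_left hr0.le hT0 hs
            have h2' : r/t ≤ r/T0 :=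
              div_le_div_of_nonneg_left hr0.le hT0 (le_trans hs hst)
            linarith
          have hB : (a*r/(2*c))/2 ≤ a*r/4 := by
            rw [div_div, show (2*c)*2 = 4*c by ring]
            apply div_le_div_of_nonneg_left (by positivity) (by norm_num)
            linarith
          linarith
      _ = K1 := by
          rw [hK1_def, show r/T0 + a*r/4 = r*(1/T0 + a/4) by ring,
            show (2*Real.pi*r) = ((2*Real.pi)*r) by ring, mul_inv, mul_assoc,
            inv_mul_cancel_left₀ hr0.ne']
  -- pointwise bound on [s/2, s]
  have h2 : ∀ r ∈ Set.Icc (s/2) s,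
      F r ≤ Real.pi⁻¹ * (2*(s-r)+m)⁻¹ + (2*Real.pi*T0)⁻¹ := by
    intro r hr
    obtain ⟨hr1, hr2⟩ := hr
    have hr0 : 0 < r := by linarith
    rw [hFr r hr0 (by linarith) hr2]
    set c : ℝ := 2 - r/s - r/t with hc_def
    have hc0 : 0 ≤ c := by
      rw [hc_def]
      have h1' : r/s ≤ 1 := (div_le_one hs0).mpr hr2
      have h2' : r/t ≤ 1 := (div_le_one ht0).mpr (le_trans hr2 hst)
      linarith
    have hd0 : 0 < 2*(s-r) + m := by linarith
    have hv0 : (0:ℝ) ≤ 2*Real.pi*(r*c) :=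
      mul_nonneg (by positivity) (mul_nonneg hr0.le hc0)
    have hP0 : 0 ≤ (2*Real.pi*(r*c))⁻¹ * Real.exp (-(a*r^2)/(2*(r*c))) :=
      mul_nonneg (inv_nonneg.mpr hv0) (Real.exp_nonneg _)
    have hQ0 : (0:ℝ) ≤ 1/(4*Real.pi*r) := by positivity
    have habs : |(2*Real.pi*(r*c))⁻¹ * Real.exp (-(a*r^2)/(2*(r*c))) - 1/(4*Real.pi*r)|
        ≤ (2*Real.pi*(r*c))⁻¹ * Real.exp (-(a*r^2)/(2*(r*c))) + 1/(4*Real.pi*r) := by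
      calc _ ≤ |(2*Real.pi*(r*c))⁻¹ * Real.exp (-(a*r^2)/(2*(r*c)))| + |1/(4*Real.pi*r)| :=
            abs_sub _ _
      _ = _ := by rw [abs_of_nonneg hP0, abs_of_nonneg hQ0]
    have e0' : -(a*r^2) / (2*(r*c)) = -((a*r/2)/c) := by
      rw [div_div]
      rw [neg_div, show a*r^2 = r*(a*r) by ring, show 2*(r*c) = r*(2*c) by ring,
        mul_div_mul_left _ _ hr0.ne']
    have e1 : (2*Real.pi*(r*c))⁻¹ = (2*Real.pi*r)⁻¹ * c⁻¹ := by
      rw [show 2*Real.pi*(r*c) = (2*Real.pi*r)*c by ring, mul_inv]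
    have hw0 : 0 ≤ a*r/2 := by positivity
    have hb1 : c⁻¹ * Real.exp (-((a*r/2)/c)) ≤ (c + a*r/2)⁻¹ :=
      aux_inv_exp c (a*r/2) hc0 hw0
    have hb2 : (c + a*r/2)⁻¹ ≤ (c + a*s/4)⁻¹ := by
      apply inv_anti₀ (add_pos_of_nonneg_of_pos hc0 (by positivity))
      have h6 : a*(s/2) ≤ a*r := mul_le_mul_of_nonneg_left hr1 ha.le
      linarith
    have hb3 : (c + a*s/4)⁻¹ ≤ s * (2*(s-r) + m)⁻¹ := by
      have key : (2*(s-r) + m)/s ≤ c + a*s/4 := by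
        rw [div_le_iff₀ hs0]
        have h5 : s*(r/t) ≤ r := by
          rw [mul_div_assoc', div_le_iff₀ ht0]
          have h7 : r*s ≤ r*t := mul_le_mul_of_nonneg_left hst hr0.le
          linarith
        have hsc : (c + a*s/4)*s = 2*s - r - s*(r/t) + a*s^2/4 := by
          rw [hc_def]
          field_simp
        rw [hsc, hm_def]
        linarith
      calc (c + a*s/4)⁻¹ ≤ ((2*(s-r) + m)/s)⁻¹ := inv_anti₀ (by positivity) key
      _ = s * (2*(s-r)+m)⁻¹ := by rw [inv_div, div_eq_mul_inv]
    have hfac : (2*Real.pi*r)⁻¹ ≤ (Real.pi*s)⁻¹ := by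
      apply inv_anti₀ (by positivity)
      have h8 : Real.pi*s ≤ Real.pi*(2*r) := mul_le_mul_of_nonneg_left (by linarith) hπ0.le
      linarith
    have hPb : (2*Real.pi*(r*c))⁻¹ * Real.exp (-(a*r^2)/(2*(r*c)))
        ≤ Real.pi⁻¹ * (2*(s-r)+m)⁻¹ := by
      rw [e0', e1, mul_assoc]
      calc (2*Real.pi*r)⁻¹ * (c⁻¹ * Real.exp (-((a*r/2)/c)))
          ≤ (Real.pi*s)⁻¹ * (s * (2*(s-r)+m)⁻¹) := by
            apply mul_le_mul hfac (hb1.trans (hb2.trans hb3))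
              (mul_nonneg (inv_nonneg.mpr hc0) (Real.exp_nonneg _)) (by positivity)
      _ = Real.pi⁻¹ * (2*(s-r)+m)⁻¹ := by
            field_simp
    have hQb : 1/(4*Real.pi*r) ≤ (2*Real.pi*T0)⁻¹ := by
      rw [one_div]
      apply inv_anti₀ (by positivity)
      have h9 : Real.pi*T0 ≤ Real.pi*(2*r) := mul_le_mul_of_nonneg_left (by linarith) hπ0.le
      linarith
    linarith
  -- integrability and splitting
  have hsub1 : Set.uIcc L (s/2) ⊆ Set.uIcc L s := by
    rw [Set.uIcc_of_le hLs2, Set.uIcc_of_le hLs]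
    exact Set.Icc_subset_Icc le_rfl (by linarith)
  have hsub2 : Set.uIcc (s/2) s ⊆ Set.uIcc L s := by
    rw [Set.uIcc_of_le (by linarith : s/2 ≤ s), Set.uIcc_of_le hLs]
    exact Set.Icc_subset_Icc hLs2 le_rfl
  have hI1 := hI.mono_set hsub1
  have hI2 := hI.mono_set hsub2
  have hg2cont : ContinuousOn (fun r : ℝ => (2*(s-r)+m)⁻¹) (Set.uIcc (s/2) s) := by
    apply ContinuousOn.inv₀
    · fun_prop
    · intro r hr
      rw [Set.uIcc_of_le (by linarith : s/2 ≤ s)] at hr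
      have h10 : 0 < 2*(s-r)+m := by linarith [hr.2]
      exact h10.ne'
  have hIφ2 : IntervalIntegrable
      (fun r => Real.pi⁻¹ * (2*(s-r)+m)⁻¹ + (2*Real.pi*T0)⁻¹) volume (s/2) s :=
    ((continuousOn_const.mul hg2cont).add continuousOn_const).intervalIntegrable
  have hB1 : (∫ r in L..(s/2), F r) ≤ (s/2 - L) * K1 := by
    have hmono := intervalIntegral.integral_mono_on hLs2 hI1
      (intervalIntegrable_const (c := K1)) h1
    rwa [intervalIntegral.integral_const, smul_eq_mul] at hmono
  have hB2 : (∫ r in (s/2)..s, F r)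
      ≤ Real.pi⁻¹ * ((Real.log (s+m) - Real.log m)/2) + (s - s/2) * (2*Real.pi*T0)⁻¹ := by
    have hmono := intervalIntegral.integral_mono_on (by linarith : s/2 ≤ s) hI2 hIφ2 h2
    have hval : (∫ r in (s/2)..s,
        (Real.pi⁻¹ * (2*(s-r)+m)⁻¹ + (2*Real.pi*T0)⁻¹))
        = Real.pi⁻¹ * ((Real.log (s+m) - Real.log m)/2) + (s - s/2) * (2*Real.pi*T0)⁻¹ := by
      rw [intervalIntegral.integral_add
          (show IntervalIntegrable (fun r => Real.pi⁻¹ * (2*(s-r)+m)⁻¹) volume (s/2) s from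
            (continuousOn_const.mul hg2cont).intervalIntegrable)
          (intervalIntegrable_const (c := (2*Real.pi*T0)⁻¹)),
        intervalIntegral.integral_const_mul, aux_logint s m hs0 hm0,
        intervalIntegral.integral_const, smul_eq_mul]
    rw [hval] at hmono
    exact hmono
  have hsplit : (∫ r in L..s, F r)
      = (∫ r in L..(s/2), F r) + ∫ r in (s/2)..s, F r :=
    (intervalIntegral.integral_add_adjacent_intervals hI1 hI2).symm
  -- log estimates
  have hX0 : (0:ℝ) ≤ X := by rw [hX_def]; positivity
  have hY0 : (0:ℝ) ≤ Y := by rw [hY_def]; positivity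
  have hW0 : (0:ℝ) ≤ W := abs_nonneg _
  have habsK : (0:ℝ) ≤ |Real.log (T0^2/4)| := abs_nonneg _
  have hlogmono : Real.log m ≤ Real.log (s+m) := Real.log_le_log hm0 (by linarith)
  have hlog1 : Real.log (s+m) ≤ 2*Real.log T1 + a := by
    have hsq : s^2 ≤ T1^2 := by
      have := mul_self_le_mul_self hs0.le hsT1
      nlinarith only [this]
    have hle : s + m ≤ T1^2 * (1+a) := by
      rw [hm_def]
      have hT12 : T1 ≤ T1^2 := by nlinarith only [hT1]
      have h11 : a*s^2 ≤ a*T1^2 := mul_le_mul_of_nonneg_left hsq ha.le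
      nlinarith only [hT12, h11, hsT1, ha, hs0, sq_nonneg s, sq_nonneg T1,
        mul_nonneg ha.le (sq_nonneg T1)]
    calc Real.log (s+m) ≤ Real.log (T1^2*(1+a)) := Real.log_le_log (by positivity) hle
    _ = Real.log (T1^2) + Real.log (1+a) := Real.log_mul (by positivity) (by positivity)
    _ = 2*Real.log T1 + Real.log (1+a) := by
        rw [Real.log_pow]
        push_cast
        ring
    _ ≤ 2*Real.log T1 + a := by
        have := Real.log_le_sub_one_of_pos (show (0:ℝ) < 1+a by linarith)
        linarith
  have hWa : |Real.log a| = 2*W := by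
    rw [hW_def, show enorm2 x y = Real.sqrt a by rw [enorm2, ha_def],
      Real.log_sqrt ha.le, abs_div, abs_two]
    ring
  have hlog2 : -Real.log m ≤ 2*W + |Real.log (T0^2/4)| := by
    have hms : m = a * (s^2/4) := by rw [hm_def]; ring
    rw [hms, Real.log_mul ha.ne' (by positivity)]
    have h1' : Real.log (T0^2/4) ≤ Real.log (s^2/4) := by
      apply Real.log_le_log (by positivity)
      have := mul_self_le_mul_self hT0.le hs
      nlinarith only [this]
    have h2' : -Real.log a ≤ 2*W := by rw [← hWa]; exact neg_le_abs _
    have h3' : -Real.log (T0^2/4) ≤ |Real.log (T0^2/4)| := neg_le_abs _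
    linarith
  have ha2 : a ≤ 2*(X+Y) := by
    rw [ha_def, hX_def, hY_def]
    nlinarith only [sq_nonneg (x.1+y.1), sq_nonneg (x.2+y.2)]
  -- final arithmetic
  have hp1 : (2*Real.pi)⁻¹ ≤ 1 := by
    calc (2*Real.pi)⁻¹ ≤ (1:ℝ)⁻¹ := inv_anti₀ one_pos (by linarith)
    _ = 1 := inv_one
  have hp2 : Real.pi⁻¹ ≤ 1 := by
    calc Real.pi⁻¹ ≤ (1:ℝ)⁻¹ := inv_anti₀ one_pos (by linarith)
    _ = 1 := inv_one
  have hp3 : (2*Real.pi*T0)⁻¹ ≤ (2*T0)⁻¹ := by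
    apply inv_anti₀ (by positivity)
    have h12 : 1*(2*T0) ≤ Real.pi*(2*T0) := mul_le_mul_of_nonneg_right (by linarith) (by positivity)
    linarith
  have hE0 : (0:ℝ) ≤ 1/T0 + a/4 := by positivity
  have ht1 : (s/2 - L) * K1 ≤ (T1/2) * (1/T0 + a/4) := by
    rw [hK1_def]
    have hK1le : (2*Real.pi)⁻¹ * (1/T0 + a/4) ≤ 1/T0 + a/4 :=
      mul_le_of_le_one_left hE0 hp1
    have h2' : s/2 - L ≤ T1/2 := by linarith
    exact mul_le_mul h2' hK1le (by positivity) (by linarith)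
  have hD0 : 0 ≤ (Real.log (s+m) - Real.log m)/2 := by linarith
  have ht2 : Real.pi⁻¹ * ((Real.log (s+m) - Real.log m)/2)
      ≤ (Real.log (s+m) - Real.log m)/2 := mul_le_of_le_one_left hD0 hp2
  have ht3 : (s - s/2) * (2*Real.pi*T0)⁻¹ ≤ (T1/2) * (2*T0)⁻¹ := by
    have h2' : s - s/2 ≤ T1/2 := by linarith
    have h3' : (0:ℝ) ≤ (2*Real.pi*T0)⁻¹ := by positivity
    exact mul_le_mul h2' hp3 h3' (by linarith)
  have hC1 : T1/4 + 1 ≤ C := by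
    rw [hC_def]
    have : (0:ℝ) ≤ T1/T0 := by positivity
    linarith
  have hC2 : (1:ℝ) ≤ C := by
    rw [hC_def]
    have : (0:ℝ) ≤ T1/T0 := by positivity
    linarith
  have hdiv1 : T1/(2*T0) + T1/(4*T0) ≤ T1/T0 := by
    have h0 : T1/(2*T0) + T1/(4*T0) = (3/4)*(T1/T0) := by
      field_simp
      ring
    have h1' : (0:ℝ) ≤ T1/T0 := by positivity
    linarith
  have hdiv2 : (T1/2) * (1/T0) = T1/(2*T0) := by
    rw [div_mul_div_comm, mul_one]
  have hdiv3 : (T1/2) * (2*T0)⁻¹ = T1/(4*T0) := by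
    rw [← one_div, div_mul_div_comm, mul_one, show 2*(2*T0) = 4*T0 by ring]
  have p0 : a*(T1/8) + a*(1/2) ≤ (T1/4+1)*(X+Y) := by
    have q := mul_le_mul_of_nonneg_right ha2 (show (0:ℝ) ≤ T1/8 + 1/2 by linarith)
    nlinarith only [q]
  have p2' : (T1/4+1)*(X+Y) ≤ C*(X+Y) :=
    mul_le_mul_of_nonneg_right hC1 (by linarith)
  have p3 : 1*W ≤ C*W := mul_le_mul_of_nonneg_right hC2 hW0
  have p4 : T1/(2*T0) + Real.log T1 + |Real.log (T0^2/4)|/2 + T1/(4*T0) ≤ C := by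
    rw [hC_def]
    linarith
  calc (∫ r in L..s, F r)
      = (∫ r in L..(s/2), F r) + ∫ r in (s/2)..s, F r := hsplit
    _ ≤ (s/2 - L) * K1 + (Real.pi⁻¹ * ((Real.log (s+m) - Real.log m)/2)
        + (s - s/2) * (2*Real.pi*T0)⁻¹) := add_le_add hB1 hB2
    _ ≤ (T1/2) * (1/T0 + a/4) + ((Real.log (s+m) - Real.log m)/2
        + (T1/2) * (2*T0)⁻¹) := by linarith
    _ ≤ C * (1 + X + Y + W) := by
        have hD : Real.log (s+m) - Real.log m
            ≤ 2*Real.log T1 + a + 2*W + |Real.log (T0^2/4)| := by linarith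
        clear_value C a X Y W m
        linarith only [p0, p2', p3, p4, hD, hdiv2, hdiv3]
end
end

section
/- For all y', y'' ∈ ℝ² with y' ≠ y'' and all T ∈ (0,∞), ∫₀^T Q_{2r}(y',y'') dr = ∫₀^∞ (e^{−1/(4v)} − 1_{[1,∞)}(v))/(4πv) dv − (1/(2π)) ln|y'−y''| + (ln T)/(4π) + ε₁(y',y'';T) + ε₂(y',y'';T) + ε₃(y',y'';T), where ε₁(y',y'';T) := −∫_{T/|y'−y''|²}^∞ (e^{−1/(4v)} − 1_{[1,∞)}(v))/(4πv) dv, ε₂(y',y'';T) := −1_{(0,1)}(T/|y'−y''|²)·(ln T)/(4π), and ε₃(y',y'';T) := 1_{(0,1)}(T/|y'−y''|²)·(ln|y'−y''|)/(2π). Moreover, for each j ∈ {1,2,3}, all x, y ∈ ℝ², and all 0 < s ≤ t < ∞, lim_{T→∞} ∫_{ℝ²}∫_{ℝ²} Q_{1/s}(y',x)·|ε_j(y',y'';T)|·Q_{1/t}(y'',y) dy' dy'' = 0. -/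
open MeasureTheory Filter Set

noncomputable section

/-- Indicator of `(0,1)`. -/
def ind01 (u : ℝ) : ℝ := if 0 < u ∧ u < 1 then 1 else 0

/-- The error term `ε₁(y',y'';T)`. -/
def eps1 (y₁ y₂ : ℝ × ℝ) (T : ℝ) : ℝ :=
  -∫ v in Set.Ioi (T / (enorm2 y₁ y₂) ^ 2),
    (Real.exp (-(1 / (4 * v))) - ind1 v) / (4 * Real.pi * v)

/-- The error term `ε₂(y',y'';T)`. -/
def eps2 (y₁ y₂ : ℝ × ℝ) (T : ℝ) : ℝ :=
  -(ind01 (T / (enorm2 y₁ y₂) ^ 2) * Real.log T / (4 * Real.pi))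

/-- The error term `ε₃(y',y'';T)`. -/
def eps3 (y₁ y₂ : ℝ × ℝ) (T : ℝ) : ℝ :=
  ind01 (T / (enorm2 y₁ y₂) ^ 2) * Real.log (enorm2 y₁ y₂) / (2 * Real.pi)

/-!
Substituting `r = |y' - y''|² v` turns `∫₀^T Q_{2r}(y', y'') dr` into
`∫₀^{T/|y'-y''|²} e^{-1/(4v)}/(4πv) dv`. Subtracting `1_{[1,∞)}(v)/(4πv)` makes the integrand
integrable on `(0, ∞)`; the subtracted part integrates to `log (max (T/|y'-y''|²) 1) / (4π)`, which
produces the two logarithms together with `ε₂` and `ε₃`, and the tail of the compensated integral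
is `ε₁`.

For `T ≥ 1` every `|ε_j(y', y''; T)|` is at most `C (1 + |y' - y''|)`, and it tends to `0` as
`T → ∞` as soon as `y' ≠ y''`. The heat kernels have finite first moments, so this bound is
integrable against `Q_{1/s}(y', x) Q_{1/t}(y'', y)`, and dominated convergence on `ℝ² × ℝ²`, where
the diagonal is null, gives the limits.
-/

open Topology

lemma tendsto_setIntegral_Ioi_atTop {E : Type*} [NormedAddCommGroup E] [NormedSpace ℝ E]
    [CompleteSpace E] {f : ℝ → E} {a : ℝ} (hf : IntegrableOn f (Ioi a)) :
    Tendsto (fun R ↦ ∫ v in Ioi R, f v) atTop (𝓝 0) := by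
  have h := (intervalIntegral_tendsto_integral_Ioi a hf tendsto_id).const_sub
    (∫ v in Ioi a, f v)
  rw [sub_self] at h
  refine h.congr' ?_
  filter_upwards [eventually_ge_atTop a] with R hR
  rw [id, ← intervalIntegral.integral_Ioi_sub_Ioi hf hR, sub_sub_cancel]

lemma stronglyMeasurable_setIntegral_Ioi {E : Type*} [NormedAddCommGroup E] [NormedSpace ℝ E]
    {f : ℝ → E} (hf : StronglyMeasurable f) :
    StronglyMeasurable fun R ↦ ∫ v in Ioi R, f v := by
  have hF : StronglyMeasurable ({p : ℝ × ℝ | p.1 < p.2}.indicator fun p ↦ f p.2) :=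
    (hf.comp_measurable measurable_snd).indicator (measurableSet_lt measurable_fst measurable_snd)
  convert hF.integral_prod_right' (ν := volume) using 2 with R
  rw [← integral_indicator measurableSet_Ioi]
  rfl

lemma ae_fst_ne_snd {α : Type*} [MeasurableSpace α] [MeasurableEq α] {μ ν : Measure α}
    [SFinite ν] [NullSingletonClass ν] : ∀ᵐ p ∂μ.prod ν, p.1 ≠ p.2 :=
  (Measure.ae_prod_iff_ae_ae measurableSet_diagonal.compl).2 <|
    .of_forall fun x ↦ ae_iff.2 <| measure_mono_null (fun y hy ↦ by
      simpa [eq_comm] using hy) (measure_singleton x)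

lemma enorm2_nonneg (a b : ℝ × ℝ) : 0 ≤ enorm2 a b := Real.sqrt_nonneg _

lemma enorm2_sq (a b : ℝ × ℝ) : enorm2 a b ^ 2 = (a.1 - b.1) ^ 2 + (a.2 - b.2) ^ 2 :=
  Real.sq_sqrt (by positivity)

lemma enorm2_pos {a b : ℝ × ℝ} (hab : a ≠ b) : 0 < enorm2 a b := by
  refine Real.sqrt_pos.2 ?_
  rcases eq_or_ne a.1 b.1 with h1 | h1
  · have h2 : a.2 ≠ b.2 := fun h2 ↦ hab (Prod.ext h1 h2)
    have := sq_pos_of_ne_zero (sub_ne_zero.2 h2)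
    positivity
  · have := sq_pos_of_ne_zero (sub_ne_zero.2 h1)
    positivity

lemma continuous_enorm2 : Continuous fun p : (ℝ × ℝ) × (ℝ × ℝ) ↦ enorm2 p.1 p.2 := by
  unfold enorm2
  fun_prop

lemma one_add_enorm2_le (a b : ℝ × ℝ) :
    1 + enorm2 a b ≤ (1 + |a.1|) * (1 + |a.2|) * ((1 + |b.1|) * (1 + |b.2|)) := by
  have hsq : enorm2 a b ≤ |a.1 - b.1| + |a.2 - b.2| := by
    rw [enorm2, Real.sqrt_le_left (by positivity)]
    nlinarith [sq_abs (a.1 - b.1), sq_abs (a.2 - b.2), abs_nonneg (a.1 - b.1),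
      abs_nonneg (a.2 - b.2)]
  have hprod {x y : ℝ} (hx : 0 ≤ x) (hy : 0 ≤ y) : 1 + x + y ≤ (1 + x) * (1 + y) := by
    nlinarith [mul_nonneg hx hy]
  calc 1 + enorm2 a b ≤ 1 + (|a.1| + |a.2|) + (|b.1| + |b.2|) := by
        linarith [abs_sub a.1 b.1, abs_sub a.2 b.2]
    _ ≤ (1 + (|a.1| + |a.2|)) * (1 + (|b.1| + |b.2|)) := hprod (by positivity) (by positivity)
    _ ≤ (1 + |a.1|) * (1 + |a.2|) * ((1 + |b.1|) * (1 + |b.2|)) := by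
      gcongr
      · linarith [hprod (abs_nonneg a.1) (abs_nonneg a.2)]
      · linarith [hprod (abs_nonneg b.1) (abs_nonneg b.2)]

lemma measurable_ind1 : Measurable ind1 :=
  Measurable.ite measurableSet_Ici measurable_const measurable_const

lemma measurable_ind01 : Measurable ind01 :=
  Measurable.ite measurableSet_Ioo measurable_const measurable_const

lemma ind01_div_sq_eq_zero {T d : ℝ} (h : d ^ 2 ≤ T) : ind01 (T / d ^ 2) = 0 := by
  refine if_neg fun ⟨hpos, hlt⟩ ↦ ?_
  rcases (sq_nonneg d).eq_or_lt with hd | hd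
  · rw [← hd, div_zero] at hpos
    exact hpos.false
  · exact (div_lt_one hd).1 hlt |>.not_ge h

lemma ind01_div_sq_eq_one {T d : ℝ} (hT : 0 < T) (h : T < d ^ 2) : ind01 (T / d ^ 2) = 1 :=
  if_pos ⟨div_pos hT (hT.trans h), (div_lt_one (hT.trans h)).2 h⟩

def compensatedKernel (v : ℝ) : ℝ :=
  (Real.exp (-(1 / (4 * v))) - ind1 v) / (4 * Real.pi * v)

lemma measurable_compensatedKernel : Measurable compensatedKernel := by
  have := measurable_ind1
  unfold compensatedKernel
  fun_prop

lemma abs_compensatedKernel_le_one {v : ℝ} (hv : v ∈ Ioo 0 1) : |compensatedKernel v| ≤ 1 := by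
  obtain ⟨hv0, hv1⟩ := hv
  have hxexp : 1 / (4 * v) * Real.exp (-(1 / (4 * v))) ≤ 1 := by
    rw [Real.exp_neg, ← div_eq_mul_inv, div_le_one (Real.exp_pos _)]
    linarith [Real.add_one_le_exp (1 / (4 * v))]
  have hind : ind1 v = 0 := if_neg (not_le.2 hv1)
  have heq : compensatedKernel v = 1 / (4 * v) * Real.exp (-(1 / (4 * v))) / Real.pi := by
    rw [compensatedKernel, hind, sub_zero]
    field_simp
  rw [heq, abs_of_nonneg (by positivity), div_le_one Real.pi_pos]
  linarith [Real.pi_gt_three]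

lemma abs_compensatedKernel_le_rpow {v : ℝ} (hv : 1 ≤ v) :
    |compensatedKernel v| ≤ v ^ (-2 : ℝ) := by
  have hv0 : 0 < v := by linarith
  have hind : ind1 v = 1 := if_pos hv
  have hexp_le : Real.exp (-(1 / (4 * v))) ≤ 1 := Real.exp_le_one_iff.2 (by simp; positivity)
  have hexp_ge : 1 - 1 / (4 * v) ≤ Real.exp (-(1 / (4 * v))) := by
    linarith [Real.add_one_le_exp (-(1 / (4 * v)))]
  rw [compensatedKernel, hind, abs_div, abs_of_nonpos (by linarith),
    abs_of_pos (by positivity), Real.rpow_neg hv0.le, Real.rpow_two,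
    div_le_iff₀ (by positivity)]
  calc -(Real.exp (-(1 / (4 * v))) - 1) ≤ 1 / (4 * v) := by linarith
    _ ≤ (v ^ 2)⁻¹ * (4 * Real.pi * v) := by
      field_simp
      nlinarith [Real.pi_gt_three]

lemma integrableOn_compensatedKernel : IntegrableOn compensatedKernel (Ioi 0) := by
  have hmeas : AEStronglyMeasurable compensatedKernel volume :=
    measurable_compensatedKernel.aestronglyMeasurable
  have hsmall : IntegrableOn compensatedKernel (Ioo 0 1) :=
    Integrable.mono' (integrable_const 1) hmeas.restrict <|
      (ae_restrict_iff' measurableSet_Ioo).2 <| .of_forall fun _ hv ↦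
        abs_compensatedKernel_le_one hv
  have hlarge : IntegrableOn compensatedKernel (Ici 1) :=
    Integrable.mono' ((integrableOn_Ici_iff_integrableOn_Ioi (f := fun v : ℝ ↦ v ^ (-2 : ℝ))).2 <|
        integrableOn_Ioi_rpow_of_lt (by norm_num) one_pos) hmeas.restrict <|
      (ae_restrict_iff' measurableSet_Ici).2 <| .of_forall fun _ hv ↦
        abs_compensatedKernel_le_rpow hv
  rw [← Ioo_union_Ici_eq_Ioi one_pos]
  exact hsmall.union hlarge

lemma abs_setIntegral_Ioi_compensatedKernel_le {R : ℝ} (hR : 0 ≤ R) :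
    |∫ v in Ioi R, compensatedKernel v| ≤ ∫ v in Ioi 0, |compensatedKernel v| :=
  (abs_integral_le_integral_abs).trans <|
    setIntegral_mono_set integrableOn_compensatedKernel.abs (.of_forall fun _ ↦ abs_nonneg _)
      (Ioi_subset_Ioi hR).eventuallyLE

lemma heatK_two_mul_eq {a b : ℝ × ℝ} (hab : a ≠ b) (r : ℝ) :
    heatK (2 * r) a b = (enorm2 a b ^ 2)⁻¹ *
      (Real.exp (-(1 / (4 * (r / enorm2 a b ^ 2)))) / (4 * Real.pi * (r / enorm2 a b ^ 2))) := by
  have hd : enorm2 a b ≠ 0 := (enorm2_pos hab).ne'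
  rw [heatK, ← enorm2_sq]
  rcases eq_or_ne r 0 with rfl | hr
  · simp
  · field_simp
    ring_nf

lemma integral_heatK_two_mul_eq_rescaled {a b : ℝ × ℝ} (hab : a ≠ b) (T : ℝ) :
    ∫ r in (0 : ℝ)..T, heatK (2 * r) a b =
      ∫ v in (0 : ℝ)..T / enorm2 a b ^ 2, Real.exp (-(1 / (4 * v))) / (4 * Real.pi * v) := by
  have hc : enorm2 a b ^ 2 ≠ 0 := (pow_pos (enorm2_pos hab) 2).ne'
  simp_rw [heatK_two_mul_eq hab, intervalIntegral.integral_const_mul,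
    intervalIntegral.integral_comp_div (fun v ↦ Real.exp (-(1 / (4 * v))) / (4 * Real.pi * v)) hc,
    zero_div, smul_eq_mul, inv_mul_cancel_left₀ hc]

lemma ind1_div_eq_indicator (v : ℝ) :
    ind1 v / (4 * Real.pi * v) = (4 * Real.pi)⁻¹ * (Ici 1).indicator (fun v ↦ v⁻¹) v := by
  by_cases hv : 1 ≤ v
  · rw [ind1, if_pos hv, indicator_of_mem (mem_Ici.2 hv)]
    field_simp
  · rw [ind1, if_neg hv, indicator_of_notMem (fun h ↦ hv (mem_Ici.1 h))]
    simp

lemma Ioc_zero_inter_Ici_one {U : ℝ} : Ioc 0 U ∩ Ici 1 = Icc 1 U := by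
  ext v
  simp only [mem_inter_iff, mem_Ioc, mem_Ici, mem_Icc]
  exact ⟨fun ⟨⟨_, hvU⟩, h1v⟩ ↦ ⟨h1v, hvU⟩, fun ⟨h1v, hvU⟩ ↦ ⟨⟨by linarith, hvU⟩, h1v⟩⟩

lemma abs_ind1_div_le_one (v : ℝ) : |ind1 v / (4 * Real.pi * v)| ≤ 1 := by
  by_cases hv : 1 ≤ v
  · rw [ind1, if_pos hv, abs_of_pos (by positivity), div_le_one (by positivity)]
    nlinarith [Real.pi_gt_three]
  · simp [ind1, hv]

lemma intervalIntegrable_ind1_div (U : ℝ) :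
    IntervalIntegrable (fun v ↦ ind1 v / (4 * Real.pi * v)) volume 0 U :=
  intervalIntegrable_const.mono_fun'
    ((measurable_ind1.div (by fun_prop)).aestronglyMeasurable)
    (.of_forall fun v ↦ abs_ind1_div_le_one v)

lemma intervalIntegral_ind1_div {U : ℝ} (hU : 0 ≤ U) :
    ∫ v in (0 : ℝ)..U, ind1 v / (4 * Real.pi * v) = Real.log (max U 1) / (4 * Real.pi) := by
  simp_rw [ind1_div_eq_indicator, intervalIntegral.integral_const_mul,
    intervalIntegral.integral_of_le hU, setIntegral_indicator measurableSet_Ici,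
    Ioc_zero_inter_Ici_one]
  rcases le_or_gt 1 U with h1U | hU1
  · rw [integral_Icc_eq_integral_Ioc, ← intervalIntegral.integral_of_le h1U,
      integral_inv (by simp [uIcc_of_le h1U]), div_one, max_eq_left h1U]
    ring
  · rw [Icc_eq_empty (not_le.2 hU1), max_eq_right hU1.le]
    simp

lemma intervalIntegral_exp_div_eq {U : ℝ} (hU : 0 ≤ U) :
    ∫ v in (0 : ℝ)..U, Real.exp (-(1 / (4 * v))) / (4 * Real.pi * v) =
      (∫ v in Ioi 0, compensatedKernel v) - (∫ v in Ioi U, compensatedKernel v) +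
        Real.log (max U 1) / (4 * Real.pi) := by
  have hsplit : ∀ v : ℝ, Real.exp (-(1 / (4 * v))) / (4 * Real.pi * v) =
      compensatedKernel v + ind1 v / (4 * Real.pi * v) := fun v ↦ by
    rw [compensatedKernel, ← add_div, sub_add_cancel]
  have hκ : IntervalIntegrable compensatedKernel volume 0 U :=
    (intervalIntegrable_iff_integrableOn_Ioc_of_le hU).2 <|
      integrableOn_compensatedKernel.mono_set Ioc_subset_Ioi_self
  simp_rw [hsplit]
  rw [intervalIntegral.integral_add hκ (intervalIntegrable_ind1_div U),
    ← intervalIntegral.integral_Ioi_sub_Ioi integrableOn_compensatedKernel hU,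
    intervalIntegral_ind1_div hU]

theorem integral_heatK_two_mul_eq_log_add_eps {a b : ℝ × ℝ} (hab : a ≠ b) {T : ℝ}
    (hT : 0 < T) :
    (∫ r in (0:ℝ)..T, heatK (2 * r) a b) =
      (∫ v in Set.Ioi (0:ℝ), (Real.exp (-(1 / (4 * v))) - ind1 v) / (4 * Real.pi * v)) -
        (1 / (2 * Real.pi)) * Real.log (enorm2 a b) + Real.log T / (4 * Real.pi) +
        eps1 a b T + eps2 a b T + eps3 a b T := by
  have hd := enorm2_pos hab
  rw [integral_heatK_two_mul_eq_rescaled hab, intervalIntegral_exp_div_eq (by positivity)]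
  change _ = (∫ v in Ioi 0, compensatedKernel v) - _ + _ +
    -(∫ v in Ioi (T / enorm2 a b ^ 2), compensatedKernel v) + _ + _
  generalize (∫ v in Ioi 0, compensatedKernel v) = I
  generalize (∫ v in Ioi (T / enorm2 a b ^ 2), compensatedKernel v) = J
  simp only [eps2, eps3]
  rcases le_or_gt (enorm2 a b ^ 2) T with hdT | hTd
  · have hlog : Real.log (T / enorm2 a b ^ 2) = Real.log T - 2 * Real.log (enorm2 a b) := by
      rw [Real.log_div hT.ne' (by positivity), Real.log_pow, Nat.cast_ofNat]
    rw [ind01_div_sq_eq_zero hdT, max_eq_left ((one_le_div (by positivity)).2 hdT), hlog]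
    field_simp
    ring
  · rw [ind01_div_sq_eq_one hT hTd, max_eq_right ((div_le_one (by positivity)).2 hTd.le),
      Real.log_one]
    field_simp
    ring

lemma heatK_nonneg {σ : ℝ} (hσ : 0 ≤ σ) (a z : ℝ × ℝ) : 0 ≤ heatK σ a z := by
  unfold heatK
  positivity

lemma heatK_eq_gaussD_mul_gaussD {σ : ℝ} (hσ : 0 ≤ σ) (w z : ℝ × ℝ) :
    heatK σ w z = gaussD σ (w.1 - z.1) * gaussD σ (w.2 - z.2) := by
  rw [heatK, gaussD, gaussD, mul_mul_mul_comm, ← mul_inv, Real.mul_self_sqrt (by positivity),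
    ← Real.exp_add]
  ring_nf

lemma integrable_one_add_abs_mul_gaussD {σ : ℝ} (hσ : 0 < σ) (a : ℝ) :
    Integrable fun u ↦ (1 + |u|) * gaussD σ (u - a) := by
  have hg : Integrable fun u ↦ (1 + |a| + |u|) * gaussD σ u := by
    have h0 := integrable_exp_neg_mul_sq (b := (2 * σ)⁻¹) (by positivity)
    have h1 := (integrable_mul_exp_neg_mul_sq (b := (2 * σ)⁻¹) (by positivity)).norm
    refine ((h0.const_mul (1 + |a|)).add h1).const_mul (Real.sqrt (2 * Real.pi * σ))⁻¹
      |>.congr (.of_forall fun u ↦ ?_)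
    simp only [gaussD, Pi.add_apply, norm_mul, Real.norm_eq_abs, Real.abs_exp]
    ring_nf
  refine (hg.comp_sub_right a).mono' (by unfold gaussD; fun_prop) (.of_forall fun u ↦ ?_)
  have hgauss : 0 ≤ gaussD σ (u - a) := by unfold gaussD; positivity
  rw [Real.norm_eq_abs, abs_mul, abs_of_nonneg hgauss, abs_of_nonneg (by positivity)]
  exact mul_le_mul_of_nonneg_right (by linarith [abs_sub_abs_le_abs_sub u a]) hgauss

lemma integrable_weight_mul_heatK {σ : ℝ} (hσ : 0 < σ) (z : ℝ × ℝ) :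
    Integrable fun w : ℝ × ℝ ↦ (1 + |w.1|) * (1 + |w.2|) * heatK σ w z := by
  refine ((integrable_one_add_abs_mul_gaussD hσ z.1).mul_prod
    (integrable_one_add_abs_mul_gaussD hσ z.2)).congr (.of_forall fun w ↦ ?_)
  simp only [heatK_eq_gaussD_mul_gaussD hσ.le]
  ring

theorem tendsto_integral_heatK_mul_abs_mul_heatK {e : ℝ × ℝ → ℝ × ℝ → ℝ → ℝ} {C : ℝ}
    (hmeas : ∀ᶠ T in atTop, Measurable fun p : (ℝ × ℝ) × (ℝ × ℝ) ↦ e p.1 p.2 T)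
    (hbound : ∀ᶠ T in atTop, ∀ a b, |e a b T| ≤ C * (1 + enorm2 a b))
    (hlim : ∀ a b, a ≠ b → Tendsto (e a b) atTop (𝓝 0))
    {σ τ : ℝ} (hσ : 0 < σ) (hτ : 0 < τ) (x y : ℝ × ℝ) :
    Tendsto (fun T ↦ ∫ a, ∫ b, heatK σ a x * |e a b T| * heatK τ b y) atTop (𝓝 0) := by
  set F : ℝ → (ℝ × ℝ) × (ℝ × ℝ) → ℝ := fun T p ↦ heatK σ p.1 x * |e p.1 p.2 T| * heatK τ p.2 y
  set majorant : (ℝ × ℝ) × (ℝ × ℝ) → ℝ := fun p ↦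
    C * (((1 + |p.1.1|) * (1 + |p.1.2|) * heatK σ p.1 x) *
      ((1 + |p.2.1|) * (1 + |p.2.2|) * heatK τ p.2 y))
  have hmajorant : Integrable majorant (volume.prod volume) :=
    ((integrable_weight_mul_heatK hσ x).mul_prod (integrable_weight_mul_heatK hτ y)).const_mul C
  have hF_meas : ∀ᶠ T in atTop, AEStronglyMeasurable (F T) (volume.prod volume) := by
    filter_upwards [hmeas] with T hT
    exact (by simp only [F, heatK]; fun_prop : Measurable (F T)).aestronglyMeasurable
  have hF_le : ∀ᶠ T in atTop, ∀ p, ‖F T p‖ ≤ majorant p := by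
    filter_upwards [hbound] with T hT p
    have hQσ := heatK_nonneg hσ.le p.1 x
    have hQτ := heatK_nonneg hτ.le p.2 y
    have hC : 0 ≤ C := nonneg_of_mul_nonneg_left ((abs_nonneg _).trans (hT p.1 p.2))
      (by linarith [enorm2_nonneg p.1 p.2])
    have he : |e p.1 p.2 T| ≤
        C * ((1 + |p.1.1|) * (1 + |p.1.2|) * ((1 + |p.2.1|) * (1 + |p.2.2|))) :=
      (hT p.1 p.2).trans (mul_le_mul_of_nonneg_left (one_add_enorm2_le p.1 p.2) hC)
    rw [Real.norm_eq_abs, abs_of_nonneg (by positivity)]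
    calc heatK σ p.1 x * |e p.1 p.2 T| * heatK τ p.2 y ≤ heatK σ p.1 x *
          (C * ((1 + |p.1.1|) * (1 + |p.1.2|) * ((1 + |p.2.1|) * (1 + |p.2.2|)))) *
          heatK τ p.2 y := by gcongr
      _ = majorant p := by ring
  have hF_int : ∀ᶠ T in atTop, Integrable (F T) (volume.prod volume) := by
    filter_upwards [hF_meas, hF_le] with T hTm hTle
    exact hmajorant.mono' hTm (.of_forall hTle)
  have hF_lim : ∀ᵐ p ∂volume.prod volume, Tendsto (fun T ↦ F T p) atTop (𝓝 0) := by
    filter_upwards [ae_fst_ne_snd] with p hp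
    simpa using ((hlim p.1 p.2 hp).abs.const_mul (heatK σ p.1 x)).mul_const (heatK τ p.2 y)
  have h := tendsto_integral_filter_of_dominated_convergence majorant hF_meas
    (hF_le.mono fun _ hT ↦ .of_forall hT) hmajorant hF_lim
  rw [integral_zero] at h
  refine h.congr' ?_
  filter_upwards [hF_int] with T hT
  exact integral_prod (F T) hT

lemma measurable_eps1 (T : ℝ) : Measurable fun p : (ℝ × ℝ) × (ℝ × ℝ) ↦ eps1 p.1 p.2 T :=
  (stronglyMeasurable_setIntegral_Ioi measurable_compensatedKernel.stronglyMeasurable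
    |>.measurable.comp (measurable_const.div (continuous_enorm2.measurable.pow_const 2))).neg

lemma measurable_eps2 (T : ℝ) : Measurable fun p : (ℝ × ℝ) × (ℝ × ℝ) ↦ eps2 p.1 p.2 T :=
  (((measurable_ind01.comp (measurable_const.div (continuous_enorm2.measurable.pow_const 2))).mul
    measurable_const).div_const _).neg

lemma measurable_eps3 (T : ℝ) : Measurable fun p : (ℝ × ℝ) × (ℝ × ℝ) ↦ eps3 p.1 p.2 T :=
  ((measurable_ind01.comp (measurable_const.div (continuous_enorm2.measurable.pow_const 2))).mul
    (Real.measurable_log.comp continuous_enorm2.measurable)).div_const _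

lemma abs_eps1_le {T : ℝ} (hT : 0 ≤ T) (a b : ℝ × ℝ) :
    |eps1 a b T| ≤ (∫ v in Ioi 0, |compensatedKernel v|) * (1 + enorm2 a b) := by
  have hκ := abs_setIntegral_Ioi_compensatedKernel_le (div_nonneg hT (sq_nonneg (enorm2 a b)))
  have hI : 0 ≤ ∫ v in Ioi 0, |compensatedKernel v| := integral_nonneg fun _ ↦ abs_nonneg _
  change |-∫ v in Ioi (T / enorm2 a b ^ 2), compensatedKernel v| ≤ _
  rw [abs_neg]
  nlinarith [enorm2_nonneg a b]

lemma tendsto_eps1 {a b : ℝ × ℝ} (hab : a ≠ b) : Tendsto (eps1 a b) atTop (𝓝 0) := by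
  rw [← neg_zero]
  exact ((tendsto_setIntegral_Ioi_atTop integrableOn_compensatedKernel).comp
    (tendsto_id.atTop_div_const (pow_pos (enorm2_pos hab) 2))).neg

lemma log_bounds_of_ind01_ne_zero {a b : ℝ × ℝ} {T : ℝ} (hT : 1 ≤ T)
    (h : ind01 (T / enorm2 a b ^ 2) ≠ 0) :
    ind01 (T / enorm2 a b ^ 2) = 1 ∧ 0 ≤ Real.log T ∧ Real.log T ≤ 2 * Real.log (enorm2 a b) ∧
      Real.log (enorm2 a b) ≤ enorm2 a b := by
  have hTd : T < enorm2 a b ^ 2 := not_le.1 fun h' ↦ h (ind01_div_sq_eq_zero h')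
  have hd : 0 < enorm2 a b := by nlinarith [enorm2_nonneg a b]
  refine ⟨ind01_div_sq_eq_one (by linarith) hTd, Real.log_nonneg hT, ?_, ?_⟩
  · calc Real.log T ≤ Real.log (enorm2 a b ^ 2) := Real.log_le_log (by linarith) hTd.le
      _ = 2 * Real.log (enorm2 a b) := by rw [Real.log_pow, Nat.cast_ofNat]
  · linarith [Real.log_le_sub_one_of_pos hd]

lemma abs_eps2_le {T : ℝ} (hT : 1 ≤ T) (a b : ℝ × ℝ) : |eps2 a b T| ≤ 1 + enorm2 a b := by
  by_cases h : ind01 (T / enorm2 a b ^ 2) = 0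
  · rw [eps2, h, zero_mul, zero_div, neg_zero, abs_zero]
    linarith [enorm2_nonneg a b]
  obtain ⟨h1, hlogT, hlogTd, hlogd⟩ := log_bounds_of_ind01_ne_zero hT h
  rw [eps2, h1, abs_neg, one_mul, abs_of_nonneg (div_nonneg hlogT (by positivity)),
    div_le_iff₀ (by positivity)]
  nlinarith [Real.pi_gt_three, enorm2_nonneg a b]

lemma abs_eps3_le {T : ℝ} (hT : 1 ≤ T) (a b : ℝ × ℝ) : |eps3 a b T| ≤ 1 + enorm2 a b := by
  by_cases h : ind01 (T / enorm2 a b ^ 2) = 0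
  · rw [eps3, h, zero_mul, zero_div, abs_zero]
    linarith [enorm2_nonneg a b]
  obtain ⟨h1, hlogT, hlogTd, hlogd⟩ := log_bounds_of_ind01_ne_zero hT h
  rw [eps3, h1, one_mul, abs_of_nonneg (div_nonneg (by linarith) (by positivity)),
    div_le_iff₀ (by positivity)]
  nlinarith [Real.pi_gt_three, enorm2_nonneg a b]

lemma eps2_eventually_eq_zero (a b : ℝ × ℝ) : eps2 a b =ᶠ[atTop] 0 := by
  filter_upwards [eventually_ge_atTop (enorm2 a b ^ 2)] with T hT
  simp [eps2, ind01_div_sq_eq_zero hT]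

lemma eps3_eventually_eq_zero (a b : ℝ × ℝ) : eps3 a b =ᶠ[atTop] 0 := by
  filter_upwards [eventually_ge_atTop (enorm2 a b ^ 2)] with T hT
  simp [eps3, ind01_div_sq_eq_zero hT]

theorem stmt16 :
    (∀ (y₁ y₂ : ℝ × ℝ), y₁ ≠ y₂ → ∀ T : ℝ, 0 < T →
      (∫ r in (0:ℝ)..T, heatK (2 * r) y₁ y₂) =
        (∫ v in Set.Ioi (0:ℝ), (Real.exp (-(1 / (4 * v))) - ind1 v) / (4 * Real.pi * v)) -
          (1 / (2 * Real.pi)) * Real.log (enorm2 y₁ y₂) + Real.log T / (4 * Real.pi) +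
          eps1 y₁ y₂ T + eps2 y₁ y₂ T + eps3 y₁ y₂ T) ∧
    (∀ eps : (ℝ × ℝ) → (ℝ × ℝ) → ℝ → ℝ, (eps = eps1 ∨ eps = eps2 ∨ eps = eps3) →
      ∀ (x y : ℝ × ℝ) (s t : ℝ), 0 < s → s ≤ t →
        Tendsto
          (fun T : ℝ =>
            ∫ y₁ : ℝ × ℝ, ∫ y₂ : ℝ × ℝ,
              heatK (1 / s) y₁ x * |eps y₁ y₂ T| * heatK (1 / t) y₂ y)
          atTop (nhds 0)) := by
  refine ⟨fun y₁ y₂ hne T hT ↦ integral_heatK_two_mul_eq_log_add_eps hne hT, ?_⟩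
  intro eps heps x y s t hs hst
  have hσ : 0 < 1 / s := one_div_pos.2 hs
  have hτ : 0 < 1 / t := one_div_pos.2 (hs.trans_le hst)
  rcases heps with rfl | rfl | rfl
  · exact tendsto_integral_heatK_mul_abs_mul_heatK (.of_forall measurable_eps1)
      ((eventually_ge_atTop 0).mono fun _ ↦ abs_eps1_le) (fun _ _ ↦ tendsto_eps1) hσ hτ x y
  · exact tendsto_integral_heatK_mul_abs_mul_heatK (.of_forall measurable_eps2)
      ((eventually_ge_atTop 1).mono fun _ hT a b ↦ (abs_eps2_le hT a b).trans_eq (one_mul _).symm)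
      (fun a b _ ↦ tendsto_const_nhds.congr' (eps2_eventually_eq_zero a b).symm) hσ hτ x y
  · exact tendsto_integral_heatK_mul_abs_mul_heatK (.of_forall measurable_eps3)
      ((eventually_ge_atTop 1).mono fun _ hT a b ↦ (abs_eps3_le hT a b).trans_eq (one_mul _).symm)
      (fun a b _ ↦ tendsto_const_nhds.congr' (eps3_eventually_eq_zero a b).symm) hσ hτ x y
end
end
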